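/- arXiv:1603.04130 — 3 statements merged into one kernel-verified Lean document; each statement's English description precedes it below -/
import Mathlib

section
/- For any finite set η_0 ⊂ ℤ^d/R and any n ∈ ℤ_+, the SIR epidemic started from infected set η_0 and empty recovered set satisfies E_{η_0,∅}(|ρ_n|) ≤ |η_0| · E_{{0},∅}(|ρ_n|), where E_{η_0,ρ_0} denotes expectation for the epidemic started from (η_0, ρ_0). -/
open MeasureTheory ProbabilityTheory Filter
open scoped ENNReal Classical

noncomputable section

/-- Vertices of the range-`R` lattice `ℤ^d_R`, in integer coordinates:
the vertex `x : Fin d → ℤ` represents the point `x/R ∈ ℤ^d/R`. -/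
abbrev Vert (d : ℕ) := Fin d → ℤ

/-- `x ∼ y` in `ℤ^d_R`: `0 < ‖x/R − y/R‖_∞ ≤ 1`, i.e. `x ≠ y` and `|x i − y i| ≤ R`. -/
def adj (d R : ℕ) (x y : Vert d) : Prop :=
  x ≠ y ∧ ∀ i, |x i - y i| ≤ (R : ℤ)

/-- `V(R) = (2R+1)^d − 1`, the number of neighbours of any vertex of `ℤ^d_R`. -/
def numNbr (d R : ℕ) : ℕ := (2 * R + 1) ^ d - 1

/-- An element of `Sym2 (Vert d)` is an edge of `ℤ^d_R` iff its endpoints are adjacent. -/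
def IsEdge (d R : ℕ) (e : Sym2 (Vert d)) : Prop :=
  ∃ x y, e = s(x, y) ∧ adj d R x y

/-- The bond variables `B : Ω → Sym2 (Vert d) → Bool` form an i.i.d. Bernoulli(p) family,
indexed by the edges of `ℤ^d_R`, under the probability measure `μ`. -/
def IsBernoulliField {Ω : Type} [MeasurableSpace Ω] (μ : Measure Ω) (d R : ℕ) (p : ℝ)
    (B : Ω → Sym2 (Vert d) → Bool) : Prop :=
  (∀ e, IsEdge d R e → Measurable fun ω => B ω e) ∧
  iIndepFun (m := fun _ => ⊤) (fun (e : {e : Sym2 (Vert d) // IsEdge d R e}) ω => B ω e.1) μ ∧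
  (∀ e, IsEdge d R e → μ {ω | B ω e = true} = ENNReal.ofReal p)

/-- One step of the SIR dynamics, acting on the pair `(η, ρ)` of infected/recovered sets:
`η_{n+1} = {y ∈ ξ_n : ∃ x ∈ η_n, x ∼ y and B(x,y) = 1}` where `ξ_n = (η_n ∪ ρ_n)ᶜ`,
and `ρ_{n+1} = ρ_n ∪ η_n`. -/
def sirStep (d R : ℕ) (b : Sym2 (Vert d) → Bool) :
    Set (Vert d) × Set (Vert d) → Set (Vert d) × Set (Vert d) :=
  fun q =>
    ({y | y ∉ q.1 ∪ q.2 ∧ ∃ x ∈ q.1, adj d R x y ∧ b s(x, y) = true}, q.2 ∪ q.1)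

/-- The infected set `η_n` of the SIR epidemic driven by the bond variables `b`,
started from `(η_0, ρ_0)`. -/
def sirEta (d R : ℕ) (b : Sym2 (Vert d) → Bool) (η0 ρ0 : Set (Vert d)) (n : ℕ) :
    Set (Vert d) :=
  ((sirStep d R b)^[n] (η0, ρ0)).1

/-- The recovered set `ρ_n` of the SIR epidemic driven by the bond variables `b`,
started from `(η_0, ρ_0)`. -/
def sirRho (d R : ℕ) (b : Sym2 (Vert d) → Bool) (η0 ρ0 : Set (Vert d)) (n : ℕ) :
    Set (Vert d) :=
  ((sirStep d R b)^[n] (η0, ρ0)).2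

/-! ### reach sets -/

def reach (d R : ℕ) (b : Sym2 (Vert d) → Bool) (S : Set (Vert d)) : ℕ → Set (Vert d)
  | 0 => S
  | k + 1 => reach d R b S k ∪ {y | ∃ x ∈ reach d R b S k, adj d R x y ∧ b s(x, y) = true}

def prevReach (d R : ℕ) (b : Sym2 (Vert d) → Bool) (S : Set (Vert d)) : ℕ → Set (Vert d)
  | 0 => ∅
  | k + 1 => reach d R b S k

lemma prevReach_subset (d R : ℕ) (b : Sym2 (Vert d) → Bool) (S : Set (Vert d)) (n : ℕ) :
    prevReach d R b S n ⊆ reach d R b S n := by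
  cases n with
  | zero => exact Set.empty_subset _
  | succ k => exact Set.subset_union_left

lemma sir_iterate_eq (d R : ℕ) (b : Sym2 (Vert d) → Bool) (S : Set (Vert d)) (n : ℕ) :
    (sirStep d R b)^[n] (S, ∅) =
      (reach d R b S n \ prevReach d R b S n, prevReach d R b S n) := by
  induction n with
  | zero => simp [reach, prevReach]
  | succ n ih =>
    rw [Function.iterate_succ_apply', ih]
    have hPA := prevReach_subset d R b S n
    refine Prod.ext ?_ ?_
    · show {y | y ∉ (reach d R b S n \ prevReach d R b S n) ∪ prevReach d R b S n ∧
        ∃ x ∈ reach d R b S n \ prevReach d R b S n, adj d R x y ∧ b s(x, y) = true} =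
        reach d R b S (n + 1) \ prevReach d R b S (n + 1)
      have hcup : (reach d R b S n \ prevReach d R b S n) ∪ prevReach d R b S n
          = reach d R b S n := Set.diff_union_of_subset hPA
      rw [hcup]
      ext y
      simp only [Set.mem_setOf_eq, Set.mem_diff, prevReach]
      constructor
      · rintro ⟨hy, x, ⟨hx, _⟩, hxy⟩
        exact ⟨Or.inr ⟨x, hx, hxy⟩, hy⟩
      · rintro ⟨hy, hy'⟩
        rcases hy with hy | ⟨x, hx, hxy⟩
        · exact absurd hy hy'
        refine ⟨hy', x, ⟨hx, ?_⟩, hxy⟩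
        cases n with
        | zero => simp [prevReach]
        | succ k =>
          intro hxk
          exact hy' (Or.inr ⟨x, hxk, hxy⟩)
    · show prevReach d R b S n ∪ (reach d R b S n \ prevReach d R b S n)
        = prevReach d R b S (n + 1)
      rw [Set.union_diff_cancel hPA]
      rfl

lemma sirRho_eq (d R : ℕ) (b : Sym2 (Vert d) → Bool) (S : Set (Vert d)) (n : ℕ) :
    sirRho d R b S ∅ n = prevReach d R b S n := by
  rw [sirRho, sir_iterate_eq]

lemma reach_iUnion {ι : Type*} (d R : ℕ) (b : Sym2 (Vert d) → Bool) (T : ι → Set (Vert d))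
    (n : ℕ) : reach d R b (⋃ i, T i) n = ⋃ i, reach d R b (T i) n := by
  induction n with
  | zero => rfl
  | succ n ih =>
    show reach d R b (⋃ i, T i) n ∪ _ = _
    rw [ih]
    ext y
    simp only [Set.mem_union, Set.mem_iUnion, Set.mem_setOf_eq, reach]
    constructor
    · rintro (⟨i, hi⟩ | ⟨x, hx, hxy⟩)
      · exact ⟨i, Or.inl hi⟩
      · obtain ⟨i, hi⟩ := hx
        exact ⟨i, Or.inr ⟨x, hi, hxy⟩⟩
    · rintro ⟨i, hi | ⟨x, hx, hxy⟩⟩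
      · exact Or.inl ⟨i, hi⟩
      · exact Or.inr ⟨x, ⟨i, hx⟩, hxy⟩

lemma sirRho_biUnion (d R : ℕ) (b : Sym2 (Vert d) → Bool) (S : Set (Vert d)) (n : ℕ) :
    sirRho d R b S ∅ n = ⋃ x ∈ S, sirRho d R b {x} ∅ n := by
  simp only [sirRho_eq]
  cases n with
  | zero =>
    show (∅ : Set (Vert d)) = ⋃ x ∈ S, (∅ : Set (Vert d))
    simp
  | succ k =>
    show reach d R b S k = _
    have hS : S = ⋃ x : S, ({(x : Vert d)} : Set (Vert d)) := by
      exact (Set.iUnion_of_singleton_coe S).symm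
    rw [Set.biUnion_eq_iUnion]
    conv_lhs => rw [hS]
    exact reach_iUnion d R b _ k

lemma adj_finite (d R : ℕ) (x : Vert d) : {y : Vert d | adj d R x y}.Finite := by
  have : {y : Vert d | adj d R x y} ⊆
      Set.pi Set.univ (fun i => Set.Icc (x i - R) (x i + R)) := by
    intro y hy
    intro i _
    have := hy.2 i
    rw [abs_le] at this
    constructor <;> omega
  exact (Set.Finite.pi (fun i => Set.finite_Icc _ _)).subset this

lemma reach_finite (d R : ℕ) (b : Sym2 (Vert d) → Bool) (S : Set (Vert d)) (hS : S.Finite)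
    (n : ℕ) : (reach d R b S n).Finite := by
  induction n with
  | zero => exact hS
  | succ n ih =>
    refine Set.Finite.union ih ?_
    have : {y | ∃ x ∈ reach d R b S n, adj d R x y ∧ b s(x, y) = true} ⊆
        ⋃ x ∈ reach d R b S n, {y | adj d R x y} := by
      rintro y ⟨x, hx, hxy, _⟩
      exact Set.mem_biUnion hx hxy
    exact (Set.Finite.biUnion ih (fun x _ => adj_finite d R x)).subset this

lemma sirRho_finite (d R : ℕ) (b : Sym2 (Vert d) → Bool) (S : Set (Vert d)) (hS : S.Finite)
    (n : ℕ) : (sirRho d R b S ∅ n).Finite := by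
  rw [sirRho_eq]
  cases n with
  | zero => exact Set.finite_empty
  | succ k => exact reach_finite d R b S hS k

/-! ### translation -/

lemma adj_translate (d R : ℕ) (x z w : Vert d) : adj d R (z + x) (w + x) ↔ adj d R z w := by
  have key : ∀ i, (z + x) i - (w + x) i = z i - w i := by
    intro i; simp only [Pi.add_apply]; ring
  have hne : z + x ≠ w + x ↔ z ≠ w := by
    constructor
    · intro h hzw; exact h (by rw [hzw])
    · intro h hzw; exact h (add_right_cancel hzw)
  unfold adj
  rw [hne]
  constructor
  · rintro ⟨h1, h2⟩
    exact ⟨h1, fun i => by rw [← key i]; exact h2 i⟩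
  · rintro ⟨h1, h2⟩
    exact ⟨h1, fun i => by rw [key i]; exact h2 i⟩

lemma step_translate (d R : ℕ) (b : Sym2 (Vert d) → Bool) (x : Vert d)
    (η ρ : Set (Vert d)) :
    sirStep d R b ((· + x) '' η, (· + x) '' ρ) =
      ((· + x) '' (sirStep d R (fun e => b (Sym2.map (· + x) e)) (η, ρ)).1,
        (· + x) '' (sirStep d R (fun e => b (Sym2.map (· + x) e)) (η, ρ)).2) := by
  refine Prod.ext ?_ ?_
  · show {y | y ∉ (· + x) '' η ∪ (· + x) '' ρ ∧
        ∃ z ∈ (· + x) '' η, adj d R z y ∧ b s(z, y) = true} = _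
    ext y
    simp only [Set.mem_setOf_eq, Set.mem_image]
    constructor
    · rintro ⟨hy, z, ⟨w, hw, rfl⟩, hadj, hb⟩
      refine ⟨y - x, ⟨?_, w, hw, ?_, ?_⟩, by simp⟩
      · intro hmem
        apply hy
        rcases hmem with hmem | hmem
        · exact Or.inl ⟨y - x, hmem, by simp⟩
        · exact Or.inr ⟨y - x, hmem, by simp⟩
      · have : adj d R (w + x) ((y - x) + x) := by
          simpa using hadj
        exact (adj_translate d R x w (y - x)).1 this
      · show b (Sym2.map (· + x) s(w, y - x)) = true
        rw [Sym2.map_pair_eq]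
        simpa using hb
    · rintro ⟨u, ⟨hu, w, hw, hadj, hb⟩, rfl⟩
      refine ⟨?_, w + x, ⟨w, hw, rfl⟩, ?_, ?_⟩
      · rintro (⟨v, hv, hvx⟩ | ⟨v, hv, hvx⟩)
        · exact hu (Or.inl (by rwa [add_right_cancel hvx] at hv))
        · exact hu (Or.inr (by rwa [add_right_cancel hvx] at hv))
      · exact (adj_translate d R x w u).2 hadj
      · show b s(w + x, u + x) = true
        rw [← Sym2.map_pair_eq (· + x)]
        exact hb
  · show (· + x) '' ρ ∪ (· + x) '' η = _
    exact (Set.image_union _ _ _).symm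

lemma iterate_translate (d R : ℕ) (b : Sym2 (Vert d) → Bool) (x : Vert d)
    (η ρ : Set (Vert d)) (n : ℕ) :
    (sirStep d R b)^[n] ((· + x) '' η, (· + x) '' ρ) =
      ((· + x) '' ((sirStep d R (fun e => b (Sym2.map (· + x) e)))^[n] (η, ρ)).1,
        (· + x) '' ((sirStep d R (fun e => b (Sym2.map (· + x) e)))^[n] (η, ρ)).2) := by
  induction n with
  | zero => simp
  | succ n ih =>
    rw [Function.iterate_succ_apply', ih, Function.iterate_succ_apply']
    have := step_translate d R b x
      ((sirStep d R (fun e => b (Sym2.map (· + x) e)))^[n] (η, ρ)).1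
      ((sirStep d R (fun e => b (Sym2.map (· + x) e)))^[n] (η, ρ)).2
    simpa using this

lemma sirRho_translate (d R : ℕ) (b : Sym2 (Vert d) → Bool) (x : Vert d) (n : ℕ) :
    sirRho d R b {x} ∅ n =
      (· + x) '' sirRho d R (fun e => b (Sym2.map (· + x) e)) {0} ∅ n := by
  have h1 : ({x} : Set (Vert d)) = (· + x) '' {0} := by simp
  have key := iterate_translate d R b x ({0} : Set (Vert d)) ∅ n
  rw [Set.image_empty] at key
  rw [← h1] at key
  rw [sirRho, key]
  rfl

/-! ### locality -/

lemma sir_local (d R n : ℕ) (b b' : Sym2 (Vert d) → Bool)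
    (h : ∀ u w : Vert d, adj d R u w → (∀ i, |u i| ≤ (n : ℤ) * R) →
      (∀ i, |w i| ≤ (n : ℤ) * R) → b s(u, w) = b' s(u, w)) :
    (sirStep d R b)^[n] ({0}, ∅) = (sirStep d R b')^[n] ({0}, ∅) := by
  have key : ∀ k, k ≤ n →
      (sirStep d R b)^[k] ({0}, ∅) = (sirStep d R b')^[k] ({0}, ∅) ∧
      (∀ z ∈ ((sirStep d R b)^[k] (({0} : Set (Vert d)), ∅)).1, ∀ i, |z i| ≤ (k : ℤ) * R) ∧
      (∀ z ∈ ((sirStep d R b)^[k] (({0} : Set (Vert d)), ∅)).2, ∀ i, |z i| ≤ (k : ℤ) * R) := by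
    intro k
    induction k with
    | zero =>
      intro _
      refine ⟨rfl, ?_, ?_⟩
      · intro z hz i
        simp only [Function.iterate_zero, id_eq] at hz
        rcases hz with rfl
        simp
      · intro z hz
        simp only [Function.iterate_zero, id_eq] at hz
        exact absurd hz (Set.notMem_empty z)
    | succ k ih =>
      intro hkn
      obtain ⟨heq, hη, hρ⟩ := ih (Nat.le_of_succ_le hkn)
      set q := (sirStep d R b)^[k] (({0} : Set (Vert d)), ∅) with hq
      have hbound : ∀ y, (∃ x ∈ q.1, adj d R x y) → ∀ i, |y i| ≤ ((k : ℤ) + 1) * R := by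
        rintro y ⟨x, hx, hadj⟩ i
        have h1 : |x i| ≤ (k : ℤ) * R := hη x hx i
        have h2 : |x i - y i| ≤ (R : ℤ) := hadj.2 i
        have h3 : |y i| ≤ |x i| + |x i - y i| := by
          have h4 := abs_sub (x i) (x i - y i)
          rwa [sub_sub_cancel] at h4
        nlinarith [abs_nonneg (x i), abs_nonneg (x i - y i)]
      have hkR : ((k : ℤ) + 1) * R ≤ (n : ℤ) * R := by
        have : ((k : ℤ) + 1) ≤ (n : ℤ) := by exact_mod_cast hkn
        have hR : (0 : ℤ) ≤ (R : ℤ) := Int.ofNat_nonneg R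
        nlinarith
      have hkR' : (k : ℤ) * R ≤ (n : ℤ) * R := by
        have : (k : ℤ) ≤ (n : ℤ) := by exact_mod_cast Nat.le_of_succ_le hkn
        have hR : (0 : ℤ) ≤ (R : ℤ) := Int.ofNat_nonneg R
        nlinarith
      refine ⟨?_, ?_, ?_⟩
      · rw [Function.iterate_succ_apply', Function.iterate_succ_apply', ← heq, ← hq]
        refine Prod.ext ?_ rfl
        show {y | y ∉ q.1 ∪ q.2 ∧ ∃ x ∈ q.1, adj d R x y ∧ b s(x, y) = true} =
          {y | y ∉ q.1 ∪ q.2 ∧ ∃ x ∈ q.1, adj d R x y ∧ b' s(x, y) = true}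
        ext y
        simp only [Set.mem_setOf_eq]
        have hiff : ∀ x ∈ q.1, adj d R x y → (b s(x, y) = true ↔ b' s(x, y) = true) := by
          intro x hx hadj
          rw [h x y hadj (fun i => (hη x hx i).trans hkR')
            (fun i => (hbound y ⟨x, hx, hadj⟩ i).trans hkR)]
        constructor
        · rintro ⟨hy, x, hx, hadj, hb⟩
          exact ⟨hy, x, hx, hadj, (hiff x hx hadj).1 hb⟩
        · rintro ⟨hy, x, hx, hadj, hb⟩
          exact ⟨hy, x, hx, hadj, (hiff x hx hadj).2 hb⟩
      · rw [Function.iterate_succ_apply', ← hq]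
        rintro z ⟨_, x, hx, hadj, _⟩ i
        have h5 := hbound z ⟨x, hx, hadj⟩ i
        refine le_trans h5 (le_of_eq ?_)
        push_cast
        ring
      · rw [Function.iterate_succ_apply', ← hq]
        rintro z hz i
        have hle : (k : ℤ) * R ≤ ((k : ℤ) + 1) * R := by
          have hR : (0 : ℤ) ≤ (R : ℤ) := Int.ofNat_nonneg R
          nlinarith
        have : |z i| ≤ (k : ℤ) * R := by
          rcases hz with hz | hz
          · exact hρ z hz i
          · exact hη z hz i
        refine this.trans (le_trans hle (le_of_eq ?_))
        push_cast
        ring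
  exact (key n le_rfl).1
/-! ### the finite box of relevant edges -/

def edgeBox (d R n : ℕ) : Set (Sym2 (Vert d)) :=
  {e | IsEdge d R e ∧ ∀ y ∈ e, ∀ i, |y i| ≤ (n : ℤ) * R}

lemma edgeBox_finite (d R n : ℕ) : (edgeBox d R n).Finite := by
  have hbox : {y : Vert d | ∀ i, |y i| ≤ (n : ℤ) * R}.Finite := by
    have hsub : {y : Vert d | ∀ i, |y i| ≤ (n : ℤ) * R} ⊆
        Set.pi Set.univ (fun _ => Set.Icc (-((n : ℤ) * R)) ((n : ℤ) * R)) := by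
      intro y hy i _
      have := hy i
      rw [abs_le] at this
      exact ⟨this.1, this.2⟩
    exact (Set.Finite.pi (fun _ => Set.finite_Icc _ _)).subset hsub
  have hsub : edgeBox d R n ⊆
      (fun p : Vert d × Vert d => s(p.1, p.2)) ''
        ({y : Vert d | ∀ i, |y i| ≤ (n : ℤ) * R} ×ˢ {y : Vert d | ∀ i, |y i| ≤ (n : ℤ) * R}) := by
    rintro e ⟨⟨u, w, rfl, _⟩, hmem⟩
    exact ⟨(u, w), ⟨hmem u (Sym2.mem_mk_left u w), hmem w (Sym2.mem_mk_right u w)⟩, rfl⟩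
  exact ((hbox.prod hbox).image _).subset hsub

def boxEdges (d R n : ℕ) : Finset (Sym2 (Vert d)) := (edgeBox_finite d R n).toFinset

lemma mem_boxEdges (d R n : ℕ) (e : Sym2 (Vert d)) :
    e ∈ boxEdges d R n ↔ IsEdge d R e ∧ ∀ y ∈ e, ∀ i, |y i| ≤ (n : ℤ) * R :=
  Set.Finite.mem_toFinset _

def extCfg (d R n : ℕ) (v : {e // e ∈ boxEdges d R n} → Bool) : Sym2 (Vert d) → Bool :=
  fun e => if h : e ∈ boxEdges d R n then v ⟨e, h⟩ else false

def Gfun (d R n : ℕ) (v : {e // e ∈ boxEdges d R n} → Bool) : ℝ≥0∞ :=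
  ((sirRho d R (extCfg d R n v) {0} ∅ n).ncard : ℝ≥0∞)

lemma rho_zero_eq_G (d R n : ℕ) (b : Sym2 (Vert d) → Bool) :
    ((sirRho d R b {0} ∅ n).ncard : ℝ≥0∞) =
      Gfun d R n (fun e => b e.1) := by
  have hloc : (sirStep d R b)^[n] ({0}, ∅) =
      (sirStep d R (extCfg d R n (fun e => b e.1)))^[n] ({0}, ∅) := by
    apply sir_local
    intro u w hadj hu hw
    have hmem : s(u, w) ∈ boxEdges d R n := by
      rw [mem_boxEdges]
      refine ⟨⟨u, w, rfl, hadj⟩, ?_⟩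
      intro y hy
      rw [Sym2.mem_iff] at hy
      rcases hy with rfl | rfl
      · exact hu
      · exact hw
    show b s(u, w) = extCfg d R n (fun e => b e.1) s(u, w)
    rw [extCfg, dif_pos hmem]
  rw [Gfun, sirRho, sirRho, hloc]

lemma rho_x_eq_G (d R n : ℕ) (b : Sym2 (Vert d) → Bool) (x : Vert d) :
    ((sirRho d R b {x} ∅ n).ncard : ℝ≥0∞) =
      Gfun d R n (fun e => b (Sym2.map (· + x) e.1)) := by
  rw [sirRho_translate d R b x n,
    Set.ncard_image_of_injective _ (add_left_injective x)]
  exact rho_zero_eq_G d R n (fun e => b (Sym2.map (· + x) e))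

/-! ### union bound on cardinalities -/

lemma ncard_finset_biUnion_le {α β : Type*} (t : Finset α) (f : α → Set β) :
    (⋃ x ∈ t, f x).ncard ≤ ∑ x ∈ t, (f x).ncard := by
  classical
  induction t using Finset.induction_on with
  | empty => simp
  | insert _ _ h ih =>
    rename_i a s
    rw [Finset.sum_insert h, Finset.set_biUnion_insert]
    exact le_trans (Set.ncard_union_le _ _) (Nat.add_le_add_left ih _)

/-! ### the probabilistic part -/

def bern (p : ℝ) : Bool → ℝ≥0∞ := fun c => if c then ENNReal.ofReal p else 1 - ENNReal.ofReal p


lemma core (d R n : ℕ) (p : ℝ) {Ω : Type} [MeasurableSpace Ω] (μ : Measure Ω)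
    (hμ : IsProbabilityMeasure μ) (B : Ω → Sym2 (Vert d) → Bool)
    (hB : IsBernoulliField μ d R p B)
    (σ : Sym2 (Vert d) → Sym2 (Vert d)) (hσinj : Function.Injective σ)
    (hσedge : ∀ e ∈ boxEdges d R n, IsEdge d R (σ e))
    (G : ({e // e ∈ boxEdges d R n} → Bool) → ℝ≥0∞) :
    Measurable (fun ω => G (fun e => B ω (σ e.1))) ∧
    ∫⁻ ω, G (fun e => B ω (σ e.1)) ∂μ =
      ∑ v : {e // e ∈ boxEdges d R n} → Bool, G v * ∏ e, bern p (v e) := by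
  haveI := hμ
  classical
  set W : Ω → ({e // e ∈ boxEdges d R n} → Bool) := fun ω e => B ω (σ e.1) with hW
  have hBmeas : ∀ e : {e // e ∈ boxEdges d R n}, Measurable (fun ω => B ω (σ e.1)) :=
    fun e => hB.1 _ (hσedge e.1 e.2)
  have hsetW : ∀ v, {ω | W ω = v} =
      ⋂ e : {e // e ∈ boxEdges d R n}, (fun ω => B ω (σ e.1)) ⁻¹' {v e} := by
    intro v; ext ω
    constructor
    · intro h
      refine Set.mem_iInter.2 (fun e => ?_)
      exact congrFun h e
    · intro h
      show W ω = v
      funext e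
      exact Set.mem_singleton_iff.1 (Set.mem_iInter.1 h e)
  have hmeasW : ∀ v, MeasurableSet {ω | W ω = v} := by
    intro v; rw [hsetW]
    exact MeasurableSet.iInter (fun e => (hBmeas e) (measurableSet_singleton _))
  have hsingle : ∀ (i : Sym2 (Vert d)), IsEdge d R i → ∀ (c : Bool),
      μ ((fun ω => B ω i) ⁻¹' {c}) = bern p c := by
    intro i hi c
    cases c with
    | true =>
      have h1 : (fun ω => B ω i) ⁻¹' {true} = {ω | B ω i = true} := by ext ω; simp
      rw [h1, hB.2.2 i hi]; rfl
    | false =>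
      have hc : (fun ω => B ω i) ⁻¹' {false} = {ω | B ω i = true}ᶜ := by
        ext ω; simp
      have hm : MeasurableSet {ω | B ω i = true} := by
        have h2 : {ω | B ω i = true} = (fun ω => B ω i) ⁻¹' {true} := by ext ω; simp
        rw [h2]; exact (hB.1 i hi) (measurableSet_singleton _)
      rw [hc, prob_compl_eq_one_sub hm, hB.2.2 i hi]; rfl
  have hμW : ∀ v, μ {ω | W ω = v} = ∏ e : {e // e ∈ boxEdges d R n}, bern p (v e) := by
    intro v
    set emb : {e // e ∈ boxEdges d R n} → {e : Sym2 (Vert d) // IsEdge d R e} :=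
      fun e => ⟨σ e.1, hσedge e.1 e.2⟩ with hemb
    have hembinj : Function.Injective emb := by
      intro a b hab
      exact Subtype.ext (hσinj (congrArg Subtype.val hab))
    set sets : {e : Sym2 (Vert d) // IsEdge d R e} → Set Bool :=
      fun i => if h : ∃ e : {e // e ∈ boxEdges d R n}, emb e = i then {v h.choose}
        else Set.univ with hsets
    have hsets_emb : ∀ e : {e // e ∈ boxEdges d R n}, sets (emb e) = {v e} := by
      intro e
      have h : ∃ e' : {e // e ∈ boxEdges d R n}, emb e' = emb e := ⟨e, rfl⟩
      rw [hsets]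
      dsimp only
      rw [dif_pos h, hembinj h.choose_spec]
    have hkey := hB.2.1.measure_inter_preimage_eq_mul
      (S := Finset.image emb Finset.univ) (sets := sets) (fun i _ => MeasurableSpace.measurableSet_top)
    have hset : (⋂ i ∈ Finset.image emb Finset.univ,
        (fun (e : {e : Sym2 (Vert d) // IsEdge d R e}) ω => B ω e.1) i ⁻¹' sets i)
        = {ω | W ω = v} := by
      rw [hsetW]
      ext ω
      simp only [Set.mem_iInter, Finset.mem_image, Finset.mem_univ, true_and,
        Set.mem_preimage]
      constructor
      · intro hh e
        have h3 := hh (emb e) ⟨e, rfl⟩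
        rw [hsets_emb e] at h3
        simpa using h3
      · rintro hh i ⟨e, rfl⟩
        rw [hsets_emb e]
        simpa using hh e
    rw [hset] at hkey
    rw [hkey, Finset.prod_image (fun a _ b _ h => hembinj h)]
    refine Finset.prod_congr rfl ?_
    intro e _
    rw [hsets_emb e]
    exact hsingle (σ e.1) (hσedge e.1 e.2) (v e)
  have hdecomp : (fun ω => G (W ω)) = fun ω =>
      ∑ v : {e // e ∈ boxEdges d R n} → Bool,
        ({ω' | W ω' = v}.indicator (fun _ => G v)) ω := by
    funext ω
    rw [Finset.sum_eq_single (W ω)]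
    · rw [Set.indicator_of_mem (by exact rfl)]
    · intro v _ hv
      rw [Set.indicator_of_notMem]
      intro hmem
      exact hv ((by exact hmem : W ω = v).symm)
    · intro hmem; exact absurd (Finset.mem_univ _) hmem
  constructor
  · rw [show (fun ω => G (fun e => B ω (σ e.1))) = fun ω => G (W ω) from rfl, hdecomp]
    exact Finset.measurable_sum _ (fun v _ => (measurable_const).indicator (hmeasW v))
  · rw [show (fun ω => G (fun e => B ω (σ e.1))) = fun ω => G (W ω) from rfl] -- hm lintegral not of lambda
    calc ∫⁻ ω, G (W ω) ∂μ
        = ∫⁻ ω, ∑ v : {e // e ∈ boxEdges d R n} → Bool,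
            ({ω' | W ω' = v}.indicator (fun _ => G v)) ω ∂μ := by
          rw [← hdecomp]
      _ = ∑ v : {e // e ∈ boxEdges d R n} → Bool,
            ∫⁻ ω, ({ω' | W ω' = v}.indicator (fun _ => G v)) ω ∂μ :=
          lintegral_finset_sum _ (fun v _ => (measurable_const).indicator (hmeasW v))
      _ = ∑ v : {e // e ∈ boxEdges d R n} → Bool, G v * ∏ e, bern p (v e) := by
          refine Finset.sum_congr rfl (fun v _ => ?_)
          rw [lintegral_indicator_const (hmeasW v), hμW v]

/-- `E_{η0,∅}(|ρ_n|) ≤ |η0| · E_{{0},∅}(|ρ_n|)`. -/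
theorem sir_mean_recovered_le (d R : ℕ) (p : ℝ)
    (Ω : Type) [MeasurableSpace Ω] (μ : Measure Ω) (hμ : IsProbabilityMeasure μ)
    (B : Ω → Sym2 (Vert d) → Bool) (hB : IsBernoulliField μ d R p B)
    (η0 : Set (Vert d)) (hη0 : η0.Finite) (n : ℕ) :
    ∫⁻ ω, ((sirRho d R (B ω) η0 ∅ n).ncard : ℝ≥0∞) ∂μ
      ≤ (η0.ncard : ℝ≥0∞) *
        ∫⁻ ω, ((sirRho d R (B ω) ({0} : Set (Vert d)) ∅ n).ncard : ℝ≥0∞) ∂μ := by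
  classical
  haveI := hμ
  set t := hη0.toFinset with ht
  -- pointwise union bound
  have hpt : ∀ ω, ((sirRho d R (B ω) η0 ∅ n).ncard : ℝ≥0∞) ≤
      ∑ x ∈ t, ((sirRho d R (B ω) {x} ∅ n).ncard : ℝ≥0∞) := by
    intro ω
    have hnat : (sirRho d R (B ω) η0 ∅ n).ncard ≤
        ∑ x ∈ t, (sirRho d R (B ω) {x} ∅ n).ncard := by
      have huni : sirRho d R (B ω) η0 ∅ n = ⋃ x ∈ t, sirRho d R (B ω) {x} ∅ n := by
        rw [sirRho_biUnion]
        ext y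
        simp only [Set.mem_iUnion]
        constructor
        · rintro ⟨x, hx, hy⟩; exact ⟨x, hη0.mem_toFinset.2 hx, hy⟩
        · rintro ⟨x, hx, hy⟩; exact ⟨x, hη0.mem_toFinset.1 hx, hy⟩
      rw [huni]
      exact ncard_finset_biUnion_le t _
    have hcast := (Nat.cast_le (α := ℝ≥0∞)).2 hnat
    calc ((sirRho d R (B ω) η0 ∅ n).ncard : ℝ≥0∞)
        ≤ ((∑ x ∈ t, (sirRho d R (B ω) {x} ∅ n).ncard : ℕ) : ℝ≥0∞) := hcast
      _ = ∑ x ∈ t, ((sirRho d R (B ω) {x} ∅ n).ncard : ℝ≥0∞) := by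
          push_cast; rfl
  refine le_trans (lintegral_mono hpt) ?_
  -- edge hypotheses for the two index maps
  have hedge_id : ∀ e ∈ boxEdges d R n, IsEdge d R (id e) :=
    fun e he => ((mem_boxEdges d R n e).1 he).1
  have hedge_x : ∀ x : Vert d, ∀ e ∈ boxEdges d R n, IsEdge d R (Sym2.map (· + x) e) := by
    intro x e he
    obtain ⟨⟨u, w, rfl, hadj⟩, -⟩ := (mem_boxEdges d R n e).1 he
    refine ⟨u + x, w + x, ?_, (adj_translate d R x u w).2 hadj⟩
    rw [Sym2.map_pair_eq]
  have hcore0 := core d R n p μ hμ B hB id Function.injective_id hedge_id (Gfun d R n)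
  have hcorex : ∀ x : Vert d,
      Measurable (fun ω => Gfun d R n (fun e => B ω (Sym2.map (· + x) e.1))) ∧
      ∫⁻ ω, Gfun d R n (fun e => B ω (Sym2.map (· + x) e.1)) ∂μ =
        ∑ v : {e // e ∈ boxEdges d R n} → Bool, Gfun d R n v * ∏ e, bern p (v e) :=
    fun x => core d R n p μ hμ B hB (Sym2.map (· + x))
      (Sym2.map.injective (add_left_injective x)) (hedge_x x) (Gfun d R n)
  -- rewrite the integrand
  have hre : (fun ω => ∑ x ∈ t, ((sirRho d R (B ω) {x} ∅ n).ncard : ℝ≥0∞)) =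
      fun ω => ∑ x ∈ t, Gfun d R n (fun e => B ω (Sym2.map (· + x) e.1)) := by
    funext ω
    exact Finset.sum_congr rfl (fun x _ => rho_x_eq_G d R n (B ω) x)
  rw [hre, lintegral_finset_sum _ (fun x _ => (hcorex x).1)]
  have hconst : ∀ x ∈ t, ∫⁻ ω, Gfun d R n (fun e => B ω (Sym2.map (· + x) e.1)) ∂μ =
      ∑ v : {e // e ∈ boxEdges d R n} → Bool, Gfun d R n v * ∏ e, bern p (v e) :=
    fun x _ => (hcorex x).2
  rw [Finset.sum_congr rfl hconst, Finset.sum_const, nsmul_eq_mul]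
  have hsingleint : ∫⁻ ω, ((sirRho d R (B ω) ({0} : Set (Vert d)) ∅ n).ncard : ℝ≥0∞) ∂μ =
      ∑ v : {e // e ∈ boxEdges d R n} → Bool, Gfun d R n v * ∏ e, bern p (v e) := by
    have h0 : (fun ω => ((sirRho d R (B ω) ({0} : Set (Vert d)) ∅ n).ncard : ℝ≥0∞)) =
        fun ω => Gfun d R n (fun e => B ω e.1) :=
      funext (fun ω => rho_zero_eq_G d R n (B ω))
    rw [h0]
    exact hcore0.2
  rw [hsingleint]
  have hcard : t.card = η0.ncard := (Set.ncard_eq_toFinset_card η0 hη0).symm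
  rw [hcard]

end
end

section
/- If x ∼ y in ℤ^d_R, then P(B(x,y) = 1 | F̄_n) = p almost surely on the F̄_n-measurable event {x ∈ η_n, y ∈ ξ_n}. -/
open MeasureTheory ProbabilityTheory Filter
open scoped ENNReal Classical

noncomputable section

/-- `∂C_n`: the set of possible infection edges at time `n`, as ordered pairs `(x,y)`
with `x ∈ η_n`, `y ∈ ξ_n = (η_n ∪ ρ_n)ᶜ` and `x ∼ y`. -/
def bdryC (d R : ℕ) (b : Sym2 (Vert d) → Bool) (η0 ρ0 : Set (Vert d)) (n : ℕ) :
    Set (Vert d × Vert d) :=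
  {e | e.1 ∈ sirEta d R b η0 ρ0 n ∧
    e.2 ∉ sirEta d R b η0 ρ0 n ∪ sirRho d R b η0 ρ0 n ∧ adj d R e.1 e.2}

/-- The exploration variable `V_k` (for `k ≥ 1`): `V_k(e) = B(e)` (as `0/1`) if
`e ∈ ∂C_{k−1}`, and `V_k(e) = 2` otherwise. -/
def expVar (d R : ℕ) (b : Sym2 (Vert d) → Bool) (η0 ρ0 : Set (Vert d)) (k : ℕ) :
    Sym2 (Vert d) → ℕ :=
  fun e =>
    if (∃ x y, e = s(x, y) ∧ (x, y) ∈ bdryC d R b η0 ρ0 (k - 1)) then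
      (if b e = true then 1 else 0)
    else 2

/-- The σ-algebra `F̄_n = σ(V_1, …, V_n)`. -/
def sigmaBar {Ω : Type} [MeasurableSpace Ω] (d R : ℕ) (B : Ω → Sym2 (Vert d) → Bool)
    (η0 ρ0 : Set (Vert d)) (n : ℕ) : MeasurableSpace Ω :=
  ⨆ k ∈ Finset.Icc 1 n,
    MeasurableSpace.comap (fun ω => expVar d R (B ω) η0 ρ0 k) inferInstance

namespace SIRProofAux

variable {d R : ℕ} {η0 ρ0 : Set (Vert d)}

lemma sirEta_succ (b : Sym2 (Vert d) → Bool) (n : ℕ) :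
    sirEta d R b η0 ρ0 (n + 1) =
      {z | z ∉ sirEta d R b η0 ρ0 n ∪ sirRho d R b η0 ρ0 n ∧
        ∃ w ∈ sirEta d R b η0 ρ0 n, adj d R w z ∧ b s(w, z) = true} := by
  simp only [sirEta, sirRho, Function.iterate_succ_apply', sirStep]

lemma sirRho_succ (b : Sym2 (Vert d) → Bool) (n : ℕ) :
    sirRho d R b η0 ρ0 (n + 1) = sirRho d R b η0 ρ0 n ∪ sirEta d R b η0 ρ0 n := by
  simp only [sirEta, sirRho, Function.iterate_succ_apply', sirStep]

lemma sirRho_mono (b : Sym2 (Vert d) → Bool) : Monotone (sirRho d R b η0 ρ0) := by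
  apply monotone_nat_of_le_succ
  intro k
  rw [sirRho_succ]
  exact Set.subset_union_left

lemma sirEta_subset_sirRho (b : Sym2 (Vert d) → Bool) {k n : ℕ} (h : k < n) :
    sirEta d R b η0 ρ0 k ⊆ sirRho d R b η0 ρ0 n := by
  have h1 : sirEta d R b η0 ρ0 k ⊆ sirRho d R b η0 ρ0 (k + 1) := by
    rw [sirRho_succ]; exact Set.subset_union_right
  exact h1.trans (sirRho_mono b h)

lemma not_mem_eta_of_lt (b : Sym2 (Vert d) → Bool) {x : Vert d} {n : ℕ}
    (hx : x ∈ sirEta d R b η0 ρ0 n) {k : ℕ} (hk : k < n) :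
    x ∉ sirEta d R b η0 ρ0 k := by
  intro hxk
  obtain ⟨m, rfl⟩ : ∃ m, n = m + 1 := ⟨n - 1, by omega⟩
  rw [sirEta_succ] at hx
  obtain ⟨hx1, -⟩ := hx
  rcases Nat.lt_succ_iff_lt_or_eq.mp hk with hk' | rfl
  · exact hx1 (Or.inr (sirEta_subset_sirRho b hk' hxk))
  · exact hx1 (Or.inl hxk)

lemma not_mem_eta_of_le (b : Sym2 (Vert d) → Bool) {y : Vert d} {n : ℕ}
    (hy : y ∉ sirEta d R b η0 ρ0 n ∪ sirRho d R b η0 ρ0 n) {k : ℕ} (hk : k ≤ n) :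
    y ∉ sirEta d R b η0 ρ0 k := by
  intro hyk
  rcases eq_or_lt_of_le hk with rfl | hlt
  · exact hy (Or.inl hyk)
  · exact hy (Or.inr (sirEta_subset_sirRho b hlt hyk))

/-- Key combinatorial lemma: if `b` and `b'` agree off the edge `s(x,y)`, and under `b`
the vertex `x` is infected at time `n` while `y` is still susceptible at time `n`, then
the epidemics driven by `b` and `b'` coincide up to time `n`. -/
lemma traj_eq (b b' : Sym2 (Vert d) → Bool) {x y : Vert d} {n : ℕ}
    (hagree : ∀ e, e ≠ s(x, y) → b e = b' e)
    (hx : x ∈ sirEta d R b η0 ρ0 n)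
    (hy : y ∉ sirEta d R b η0 ρ0 n ∪ sirRho d R b η0 ρ0 n) :
    ∀ k ≤ n, sirEta d R b' η0 ρ0 k = sirEta d R b η0 ρ0 k ∧
      sirRho d R b' η0 ρ0 k = sirRho d R b η0 ρ0 k := by
  intro k hk
  induction k with
  | zero => exact ⟨rfl, rfl⟩
  | succ k ih =>
    obtain ⟨ihη, ihρ⟩ := ih (Nat.le_of_succ_le hk)
    have hbb : ∀ w, w ∈ sirEta d R b η0 ρ0 k → ∀ z, b s(w, z) = b' s(w, z) := by
      intro w hw z
      apply hagree
      intro hcon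
      rcases Sym2.eq_iff.mp hcon with ⟨h1, _⟩ | ⟨h1, _⟩
      · subst h1
        exact not_mem_eta_of_lt b hx (Nat.lt_of_succ_le hk) hw
      · subst h1
        exact not_mem_eta_of_le b hy (Nat.le_of_succ_le hk) hw
    constructor
    · rw [sirEta_succ, sirEta_succ, ihη, ihρ]
      ext z
      simp only [Set.mem_setOf_eq]
      refine and_congr_right fun _ => exists_congr fun w => ?_
      refine and_congr_right fun hw => and_congr_right fun _ => ?_
      rw [hbb w hw z]
    · rw [sirRho_succ, sirRho_succ, ihη, ihρ]

lemma expVar_eq (b b' : Sym2 (Vert d) → Bool) {x y : Vert d} {n : ℕ}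
    (hagree : ∀ e, e ≠ s(x, y) → b e = b' e)
    (hx : x ∈ sirEta d R b η0 ρ0 n)
    (hy : y ∉ sirEta d R b η0 ρ0 n ∪ sirRho d R b η0 ρ0 n)
    {k : ℕ} (hk1 : 1 ≤ k) (hkn : k ≤ n) :
    expVar d R b' η0 ρ0 k = expVar d R b η0 ρ0 k := by
  have hkm : k - 1 < n := by omega
  obtain ⟨hη, hρ⟩ := traj_eq b b' hagree hx hy (k - 1) (by omega)
  have hbdry : bdryC d R b' η0 ρ0 (k - 1) = bdryC d R b η0 ρ0 (k - 1) := by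
    unfold bdryC; rw [hη, hρ]
  funext e
  unfold expVar
  rw [hbdry]
  by_cases hcond : ∃ x' y', e = s(x', y') ∧ (x', y') ∈ bdryC d R b η0 ρ0 (k - 1)
  · rw [if_pos hcond, if_pos hcond]
    obtain ⟨x', y', rfl, hmem⟩ := hcond
    obtain ⟨hx', hy', -⟩ := hmem
    have hne : s(x', y') ≠ s(x, y) := by
      intro hcon
      rcases Sym2.eq_iff.mp hcon with ⟨h1, _⟩ | ⟨h1, _⟩
      · subst h1; exact not_mem_eta_of_lt b hx hkm hx'
      · subst h1; exact not_mem_eta_of_le b hy (le_of_lt hkm) hx'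
    rw [hagree _ hne]
  · rw [if_neg hcond, if_neg hcond]

/-- Reconstruction: membership in `η_{m+1}` is determined by the trajectory at time `m`
together with `V_{m+1}`. -/
lemma mem_eta_succ_iff_expVar (b : Sym2 (Vert d) → Bool) (m : ℕ) (z : Vert d) :
    z ∈ sirEta d R b η0 ρ0 (m + 1) ↔
      z ∉ sirEta d R b η0 ρ0 m ∪ sirRho d R b η0 ρ0 m ∧
      ∃ w, w ∈ sirEta d R b η0 ρ0 m ∧ adj d R w z ∧
        expVar d R b η0 ρ0 (m + 1) s(w, z) = 1 := by
  rw [sirEta_succ]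
  simp only [Set.mem_setOf_eq]
  refine and_congr_right fun hz => exists_congr fun w => ?_
  constructor
  · rintro ⟨hw, hadj, hb⟩
    refine ⟨hw, hadj, ?_⟩
    have hcond : ∃ x' y', s(w, z) = s(x', y') ∧
        (x', y') ∈ bdryC d R b η0 ρ0 (m + 1 - 1) :=
      ⟨w, z, rfl, hw, hz, hadj⟩
    unfold expVar
    rw [if_pos hcond, if_pos hb]
  · rintro ⟨hw, hadj, hV⟩
    refine ⟨hw, hadj, ?_⟩
    unfold expVar at hV
    by_cases hcond : ∃ x' y', s(w, z) = s(x', y') ∧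
        (x', y') ∈ bdryC d R b η0 ρ0 (m + 1 - 1)
    · rw [if_pos hcond] at hV
      by_cases hb : b s(w, z) = true
      · exact hb
      · rw [if_neg hb] at hV; exact absurd hV (by norm_num)
    · rw [if_neg hcond] at hV; exact absurd hV (by norm_num)

section Meas

variable {Ω : Type} {m' : MeasurableSpace Ω}

lemma measurableSet_eq_true {f : Ω → Bool} (hf : Measurable[m'] f) :
    MeasurableSet[m'] {ω | f ω = true} :=
  hf (measurableSet_singleton true)

/-- Measurability of vertex membership in `η_k`, `ρ_k`, for any configuration map whose
edge coordinates are measurable. -/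
lemma measurableSet_mem_sir (Cfg : Ω → Sym2 (Vert d) → Bool) (η0 ρ0 : Set (Vert d))
    (hC : ∀ e, IsEdge d R e → Measurable[m'] fun ω => Cfg ω e) (k : ℕ) :
    (∀ z, MeasurableSet[m'] {ω | z ∈ sirEta d R (Cfg ω) η0 ρ0 k}) ∧
    (∀ z, MeasurableSet[m'] {ω | z ∈ sirRho d R (Cfg ω) η0 ρ0 k}) := by
  induction k with
  | zero =>
    constructor <;> intro z
    · show MeasurableSet[m'] {ω | z ∈ η0}
      exact MeasurableSet.const _
    · show MeasurableSet[m'] {ω | z ∈ ρ0}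
      exact MeasurableSet.const _
  | succ k ih =>
    obtain ⟨ihη, ihρ⟩ := ih
    constructor <;> intro z
    · have hset : {ω | z ∈ sirEta d R (Cfg ω) η0 ρ0 (k + 1)} =
          ({ω | z ∈ sirEta d R (Cfg ω) η0 ρ0 k} ∪ {ω | z ∈ sirRho d R (Cfg ω) η0 ρ0 k})ᶜ ∩
          ⋃ w : Vert d, ({ω | w ∈ sirEta d R (Cfg ω) η0 ρ0 k} ∩
            {ω | adj d R w z ∧ Cfg ω s(w, z) = true}) := by
        ext ω
        simp only [sirEta_succ, Set.mem_setOf_eq, Set.mem_inter_iff, Set.mem_compl_iff,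
          Set.mem_union, Set.mem_iUnion]
      rw [hset]
      refine MeasurableSet.inter ((ihη z).union (ihρ z)).compl (MeasurableSet.iUnion fun w => ?_)
      refine (ihη w).inter ?_
      by_cases hadj : adj d R w z
      · have : {ω | adj d R w z ∧ Cfg ω s(w, z) = true} = {ω | Cfg ω s(w, z) = true} := by
          ext ω; simp [hadj]
        rw [this]
        exact measurableSet_eq_true (hC s(w, z) ⟨w, z, rfl, hadj⟩)
      · have : {ω | adj d R w z ∧ Cfg ω s(w, z) = true} = ∅ := by
          ext ω; simp [hadj]
        rw [this]
        exact MeasurableSet.empty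
    · have hset : {ω | z ∈ sirRho d R (Cfg ω) η0 ρ0 (k + 1)} =
          {ω | z ∈ sirRho d R (Cfg ω) η0 ρ0 k} ∪ {ω | z ∈ sirEta d R (Cfg ω) η0 ρ0 k} := by
        ext ω
        simp only [sirRho_succ, Set.mem_union, Set.mem_setOf_eq]
      rw [hset]
      exact (ihρ z).union (ihη z)

/-- Measurability of the exploration variables, for any configuration map whose
edge coordinates are measurable. -/
lemma measurable_expVar (Cfg : Ω → Sym2 (Vert d) → Bool) (η0 ρ0 : Set (Vert d))
    (hC : ∀ e, IsEdge d R e → Measurable[m'] fun ω => Cfg ω e) (k : ℕ) :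
    Measurable[m'] fun ω => expVar d R (Cfg ω) η0 ρ0 k := by
  obtain ⟨hηm, hρm⟩ := measurableSet_mem_sir Cfg η0 ρ0 hC (k - 1)
  rw [measurable_pi_iff]
  intro e
  by_cases he : IsEdge d R e
  · have hcond : MeasurableSet[m']
        {ω | ∃ x' y', e = s(x', y') ∧ (x', y') ∈ bdryC d R (Cfg ω) η0 ρ0 (k - 1)} := by
      have hset : {ω | ∃ x' y', e = s(x', y') ∧ (x', y') ∈ bdryC d R (Cfg ω) η0 ρ0 (k - 1)} =
          ⋃ (w : Vert d) (v : Vert d),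
            {ω | e = s(w, v) ∧ (w, v) ∈ bdryC d R (Cfg ω) η0 ρ0 (k - 1)} := by
        ext ω
        simp only [Set.mem_setOf_eq, Set.mem_iUnion]
      rw [hset]
      refine MeasurableSet.iUnion fun w => MeasurableSet.iUnion fun v => ?_
      by_cases hev : e = s(w, v)
      · have : {ω | e = s(w, v) ∧ (w, v) ∈ bdryC d R (Cfg ω) η0 ρ0 (k - 1)} =
            {ω | (w, v) ∈ bdryC d R (Cfg ω) η0 ρ0 (k - 1)} := by
          ext ω; simp [hev]
        rw [this]
        by_cases hadj : adj d R w v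
        · have : {ω | (w, v) ∈ bdryC d R (Cfg ω) η0 ρ0 (k - 1)} =
              {ω | w ∈ sirEta d R (Cfg ω) η0 ρ0 (k - 1)} ∩
              ({ω | v ∈ sirEta d R (Cfg ω) η0 ρ0 (k - 1)} ∪
                {ω | v ∈ sirRho d R (Cfg ω) η0 ρ0 (k - 1)})ᶜ := by
            ext ω
            simp only [bdryC, Set.mem_setOf_eq, Set.mem_inter_iff, Set.mem_compl_iff,
              Set.mem_union, hadj, and_true]
          rw [this]
          exact (hηm w).inter ((hηm v).union (hρm v)).compl
        · have : {ω | (w, v) ∈ bdryC d R (Cfg ω) η0 ρ0 (k - 1)} = ∅ := by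
            ext ω; simp [bdryC, hadj]
          rw [this]
          exact MeasurableSet.empty
      · have : {ω | e = s(w, v) ∧ (w, v) ∈ bdryC d R (Cfg ω) η0 ρ0 (k - 1)} = ∅ := by
          ext ω; simp [hev]
        rw [this]
        exact MeasurableSet.empty
    have hval : Measurable[m'] fun ω => (if Cfg ω e = true then (1 : ℕ) else 0) :=
      Measurable.ite (measurableSet_eq_true (hC e he)) measurable_const measurable_const
    show Measurable[m'] fun ω => expVar d R (Cfg ω) η0 ρ0 k e
    simp only [expVar]
    exact Measurable.ite hcond hval measurable_const
  · have heq : (fun ω => expVar d R (Cfg ω) η0 ρ0 k e) = fun _ => 2 := by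
      funext ω
      unfold expVar
      rw [if_neg]
      rintro ⟨x', y', rfl, -, -, hadj⟩
      exact he ⟨x', y', rfl, hadj⟩
    rw [heq]
    exact measurable_const

end Meas

end SIRProofAux

/-- If `x ∼ y`, then `P(B(x,y) = 1 | F̄_n) = p` a.s. on the event `{x ∈ η_n, y ∈ ξ_n}`. -/
theorem condProb_edge_unexplored (d R : ℕ) (p : ℝ) (hp0 : 0 ≤ p) (hp1 : p ≤ 1)
    (Ω : Type) [MeasurableSpace Ω] (μ : Measure Ω) (hμ : IsProbabilityMeasure μ)
    (B : Ω → Sym2 (Vert d) → Bool) (hB : IsBernoulliField μ d R p B)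
    (η0 ρ0 : Set (Vert d)) (hη0 : η0.Finite) (hρ0 : ρ0.Finite) (hdisj : Disjoint η0 ρ0)
    (x y : Vert d) (hxy : adj d R x y) (n : ℕ) :
    ∀ᵐ ω ∂(μ.restrict {ω | x ∈ sirEta d R (B ω) η0 ρ0 n ∧
        y ∉ sirEta d R (B ω) η0 ρ0 n ∪ sirRho d R (B ω) η0 ρ0 n}),
      (μ[Set.indicator {ω | B ω s(x, y) = true} (fun _ => (1 : ℝ)) |
          sigmaBar d R B η0 ρ0 n]) ω = p := by
  classical
  obtain ⟨hBmeas, hBindep, hBp⟩ := hB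
  have he₀ : IsEdge d R s(x, y) := ⟨x, y, rfl, hxy⟩
  -- ambient measurability of the exploration variables, hence `sigmaBar ≤ m0`
  have hVmeas : ∀ k : ℕ, Measurable fun ω => expVar d R (B ω) η0 ρ0 k :=
    fun k => SIRProofAux.measurable_expVar B η0 ρ0 hBmeas k
  have hm : sigmaBar d R B η0 ρ0 n ≤ ‹MeasurableSpace Ω› := by
    refine iSup_le fun k => iSup_le fun _ => ?_
    exact measurable_iff_comap_le.mp (hVmeas k)
  -- the event `E`
  set E : Set Ω := {ω | x ∈ sirEta d R (B ω) η0 ρ0 n ∧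
      y ∉ sirEta d R (B ω) η0 ρ0 n ∪ sirRho d R (B ω) η0 ρ0 n} with hE_def
  -- `E` is `sigmaBar`-measurable, via the reconstruction lemma
  have hsb : ∀ m : ℕ, m ≤ n →
      (∀ z, MeasurableSet[sigmaBar d R B η0 ρ0 n] {ω | z ∈ sirEta d R (B ω) η0 ρ0 m}) ∧
      (∀ z, MeasurableSet[sigmaBar d R B η0 ρ0 n] {ω | z ∈ sirRho d R (B ω) η0 ρ0 m}) := by
    intro m
    induction m with
    | zero =>
      intro _
      constructor <;> intro z
      · show MeasurableSet[sigmaBar d R B η0 ρ0 n] {ω | z ∈ η0}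
        exact MeasurableSet.const _
      · show MeasurableSet[sigmaBar d R B η0 ρ0 n] {ω | z ∈ ρ0}
        exact MeasurableSet.const _
    | succ m ih =>
      intro hm1
      obtain ⟨ihη, ihρ⟩ := ih (by omega)
      have hV : ∀ w z : Vert d, MeasurableSet[sigmaBar d R B η0 ρ0 n]
          {ω | expVar d R (B ω) η0 ρ0 (m + 1) s(w, z) = 1} := by
        intro w z
        have hle : MeasurableSpace.comap (fun ω => expVar d R (B ω) η0 ρ0 (m + 1))
            inferInstance ≤ sigmaBar d R B η0 ρ0 n := by
          have hmem : m + 1 ∈ Finset.Icc 1 n := by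
            rw [Finset.mem_Icc]; omega
          exact le_iSup₂ (f := fun k (_ : k ∈ Finset.Icc 1 n) =>
            MeasurableSpace.comap (fun ω => expVar d R (B ω) η0 ρ0 k) inferInstance)
            (m + 1) hmem
        exact hle _ ⟨(fun g : Sym2 (Vert d) → ℕ => g s(w, z)) ⁻¹' {1},
          (measurable_pi_apply _) (measurableSet_singleton 1), rfl⟩
      constructor <;> intro z
      · have hset : {ω | z ∈ sirEta d R (B ω) η0 ρ0 (m + 1)} =
            ({ω | z ∈ sirEta d R (B ω) η0 ρ0 m} ∪ {ω | z ∈ sirRho d R (B ω) η0 ρ0 m})ᶜ ∩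
            ⋃ w : Vert d, ({ω | w ∈ sirEta d R (B ω) η0 ρ0 m} ∩
              {ω | adj d R w z ∧ expVar d R (B ω) η0 ρ0 (m + 1) s(w, z) = 1}) := by
          ext ω
          simp only [SIRProofAux.mem_eta_succ_iff_expVar, Set.mem_setOf_eq, Set.mem_inter_iff,
            Set.mem_compl_iff, Set.mem_union, Set.mem_iUnion]
        rw [hset]
        refine MeasurableSet.inter ((ihη z).union (ihρ z)).compl
          (MeasurableSet.iUnion fun w => ?_)
        refine (ihη w).inter ?_
        by_cases hadj : adj d R w z
        · have h2 : {ω | adj d R w z ∧ expVar d R (B ω) η0 ρ0 (m + 1) s(w, z) = 1} =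
              {ω | expVar d R (B ω) η0 ρ0 (m + 1) s(w, z) = 1} := by
            ext ω; simp [hadj]
          rw [h2]; exact hV w z
        · have h2 : {ω | adj d R w z ∧ expVar d R (B ω) η0 ρ0 (m + 1) s(w, z) = 1} = ∅ := by
            ext ω; simp [hadj]
          rw [h2]; exact @MeasurableSet.empty Ω (sigmaBar d R B η0 ρ0 n)
      · have hset : {ω | z ∈ sirRho d R (B ω) η0 ρ0 (m + 1)} =
            {ω | z ∈ sirRho d R (B ω) η0 ρ0 m} ∪ {ω | z ∈ sirEta d R (B ω) η0 ρ0 m} := by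
          ext ω
          simp only [SIRProofAux.sirRho_succ, Set.mem_union, Set.mem_setOf_eq]
        rw [hset]
        exact (ihρ z).union (ihη z)
  have hE_sb : MeasurableSet[sigmaBar d R B η0 ρ0 n] E := by
    obtain ⟨hηn, hρn⟩ := hsb n le_rfl
    have hset : E = {ω | x ∈ sirEta d R (B ω) η0 ρ0 n} ∩
        ({ω | y ∈ sirEta d R (B ω) η0 ρ0 n} ∪ {ω | y ∈ sirRho d R (B ω) η0 ρ0 n})ᶜ := by
      ext ω
      simp only [hE_def, Set.mem_setOf_eq, Set.mem_inter_iff, Set.mem_compl_iff, Set.mem_union]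
    rw [hset]
    exact (hηn x).inter ((hηn y).union (hρn y)).compl
  have hE_meas : MeasurableSet E := hm E hE_sb
  -- independence setup
  set ι := {e : Sym2 (Vert d) // IsEdge d R e} with hι
  set sAlg : ι → MeasurableSpace Ω :=
    fun e => MeasurableSpace.comap (fun ω => B ω e.1) ⊤ with hsAlg
  set i₀ : ι := ⟨s(x, y), he₀⟩ with hi₀
  have hs_le : ∀ e : ι, sAlg e ≤ ‹MeasurableSpace Ω› :=
    fun e => measurable_iff_comap_le.mp (hBmeas e.1 e.2)
  have hiIndep : iIndep sAlg μ := hBindep.iIndep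
  have hindep := indep_biSup_compl hs_le hiIndep {i₀}
  -- the modified configuration
  set φ : Ω → Sym2 (Vert d) → Bool := fun ω e => if e = s(x, y) then false else B ω e with hφ
  have hCφ : ∀ e, IsEdge d R e → Measurable[(⨆ j ∈ ({i₀}ᶜ : Set ι), sAlg j)] fun ω => φ ω e := by
    intro e he
    by_cases h : e = s(x, y)
    · have h1 : (fun ω => φ ω e) = fun _ => false := funext fun ω => if_pos h
      rw [h1]; exact measurable_const
    · have h1 : (fun ω => φ ω e) = fun ω => B ω e := funext fun ω => if_neg h
      rw [h1]
      have hj : (⟨e, he⟩ : ι) ∈ ({i₀}ᶜ : Set ι) := by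
        simp only [Set.mem_compl_iff, Set.mem_singleton_iff]
        intro hcon
        exact h (congrArg Subtype.val hcon)
      exact measurable_iff_comap_le.mpr
        (le_iSup₂ (f := fun j (_ : j ∈ ({i₀}ᶜ : Set ι)) => sAlg j) ⟨e, he⟩ hj)
  have hagree1 : ∀ ω : Ω, ∀ e, e ≠ s(x, y) → B ω e = φ ω e :=
    fun ω e he => (if_neg he).symm
  have hagree2 : ∀ ω : Ω, ∀ e, e ≠ s(x, y) → φ ω e = B ω e :=
    fun ω e he => if_neg he
  -- `E` only depends on the configuration away from `s(x,y)`
  have hEφ : E = {ω | x ∈ sirEta d R (φ ω) η0 ρ0 n ∧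
      y ∉ sirEta d R (φ ω) η0 ρ0 n ∪ sirRho d R (φ ω) η0 ρ0 n} := by
    ext ω
    simp only [hE_def, Set.mem_setOf_eq]
    constructor
    · rintro ⟨hx', hy'⟩
      obtain ⟨hη, hρ⟩ := SIRProofAux.traj_eq (B ω) (φ ω) (hagree1 ω) hx' hy' n le_rfl
      rw [hη, hρ]
      exact ⟨hx', hy'⟩
    · rintro ⟨hx', hy'⟩
      obtain ⟨hη, hρ⟩ := SIRProofAux.traj_eq (φ ω) (B ω) (hagree2 ω) hx' hy' n le_rfl
      rw [hη, hρ]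
      exact ⟨hx', hy'⟩
  have hE_G : MeasurableSet[(⨆ j ∈ ({i₀}ᶜ : Set ι), sAlg j)] E := by
    rw [hEφ]
    obtain ⟨hηφ, hρφ⟩ := SIRProofAux.measurableSet_mem_sir φ η0 ρ0 hCφ n
    have hset : {ω | x ∈ sirEta d R (φ ω) η0 ρ0 n ∧
        y ∉ sirEta d R (φ ω) η0 ρ0 n ∪ sirRho d R (φ ω) η0 ρ0 n} =
        {ω | x ∈ sirEta d R (φ ω) η0 ρ0 n} ∩
        ({ω | y ∈ sirEta d R (φ ω) η0 ρ0 n} ∪ {ω | y ∈ sirRho d R (φ ω) η0 ρ0 n})ᶜ := by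
      ext ω
      simp only [Set.mem_setOf_eq, Set.mem_inter_iff, Set.mem_compl_iff, Set.mem_union]
    rw [hset]
    exact (hηφ x).inter ((hηφ y).union (hρφ y)).compl
  -- key: for any `sigmaBar`-measurable `A`, `A ∩ E` is `(⨆ j ∈ ({i₀}ᶜ : Set ι), sAlg j)`-measurable
  have hkey : ∀ A : Set Ω, MeasurableSet[sigmaBar d R B η0 ρ0 n] A →
      MeasurableSet[(⨆ j ∈ ({i₀}ᶜ : Set ι), sAlg j)] (A ∩ E) := by
    intro A hA
    let D : MeasurableSpace Ω :=
      { MeasurableSet' := fun A => MeasurableSet[(⨆ j ∈ ({i₀}ᶜ : Set ι), sAlg j)] (A ∩ E)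
        measurableSet_empty := by
          show MeasurableSet[(⨆ j ∈ ({i₀}ᶜ : Set ι), sAlg j)] (∅ ∩ E)
          rw [Set.empty_inter]; exact @MeasurableSet.empty Ω (⨆ j ∈ ({i₀}ᶜ : Set ι), sAlg j)
        measurableSet_compl := by
          intro A hA'
          show MeasurableSet[(⨆ j ∈ ({i₀}ᶜ : Set ι), sAlg j)] (Aᶜ ∩ E)
          have h1 : Aᶜ ∩ E = E \ (A ∩ E) := by
            ext ω
            simp only [Set.mem_inter_iff, Set.mem_compl_iff, Set.mem_diff]
            tauto
          rw [h1]
          exact hE_G.diff hA'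
        measurableSet_iUnion := by
          intro f hf
          show MeasurableSet[(⨆ j ∈ ({i₀}ᶜ : Set ι), sAlg j)] ((⋃ i, f i) ∩ E)
          rw [Set.iUnion_inter]
          exact MeasurableSet.iUnion hf }
    have hle : sigmaBar d R B η0 ρ0 n ≤ D := by
      refine iSup_le fun k => iSup_le fun hk => ?_
      intro A' hA'
      obtain ⟨S, hS, rfl⟩ := hA'
      show MeasurableSet[(⨆ j ∈ ({i₀}ᶜ : Set ι), sAlg j)] (((fun ω => expVar d R (B ω) η0 ρ0 k) ⁻¹' S) ∩ E)
      obtain ⟨hk1, hk2⟩ := Finset.mem_Icc.mp hk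
      have hswap : ((fun ω => expVar d R (B ω) η0 ρ0 k) ⁻¹' S) ∩ E =
          ((fun ω => expVar d R (φ ω) η0 ρ0 k) ⁻¹' S) ∩ E := by
        ext ω
        simp only [Set.mem_inter_iff, Set.mem_preimage]
        constructor
        · rintro ⟨h1, h2⟩
          refine ⟨?_, h2⟩
          have h2' := h2
          rw [hE_def] at h2'
          obtain ⟨hx', hy'⟩ := h2'
          rw [SIRProofAux.expVar_eq (B ω) (φ ω) (hagree1 ω) hx' hy' hk1 hk2]
          exact h1
        · rintro ⟨h1, h2⟩
          refine ⟨?_, h2⟩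
          have h2' := h2
          rw [hE_def] at h2'
          obtain ⟨hx', hy'⟩ := h2'
          rw [← SIRProofAux.expVar_eq (B ω) (φ ω) (hagree1 ω) hx' hy' hk1 hk2]
          exact h1
      rw [hswap]
      exact ((SIRProofAux.measurable_expVar φ η0 ρ0 hCφ k) hS).inter hE_G
    exact hle A hA
  -- the independence computation
  have hBset : MeasurableSet {ω | B ω s(x, y) = true} :=
    SIRProofAux.measurableSet_eq_true (hBmeas _ he₀)
  have hindep' : ∀ A : Set Ω, MeasurableSet[sigmaBar d R B η0 ρ0 n] A →
      μ (A ∩ E ∩ {ω | B ω s(x, y) = true}) = μ (A ∩ E) * ENNReal.ofReal p := by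
    intro A hA
    have h0 : MeasurableSet[sAlg i₀] {ω | B ω s(x, y) = true} :=
      ⟨{true}, MeasurableSpace.measurableSet_top, rfl⟩
    have h1 : MeasurableSet[⨆ j ∈ ({i₀} : Set ι), sAlg j] {ω | B ω s(x, y) = true} :=
      (le_iSup₂ (f := fun j (_ : j ∈ ({i₀} : Set ι)) => sAlg j) i₀ rfl) _ h0
    have h2 := (Indep_iff _ _ μ).mp hindep {ω | B ω s(x, y) = true} (A ∩ E) h1 (hkey A hA)
    rw [Set.inter_comm {ω | B ω s(x, y) = true} (A ∩ E)] at h2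
    rw [h2, hBp _ he₀, mul_comm]
  -- integral computations
  set f : Ω → ℝ := Set.indicator {ω | B ω s(x, y) = true} (fun _ => (1 : ℝ)) with hf_def
  have hf_int : Integrable f μ := (integrable_const (1 : ℝ)).indicator hBset
  have hsetint_f : ∀ T : Set Ω, MeasurableSet T →
      ∫ ω in T, f ω ∂μ = (μ (T ∩ {ω | B ω s(x, y) = true})).toReal := by
    intro T hT
    rw [hf_def]
    rw [integral_indicator hBset, setIntegral_const, measureReal_restrict_apply hBset,
      smul_eq_mul, mul_one, Set.inter_comm, measureReal_def]
  set h : Ω → ℝ := fun ω => E.indicator (fun _ => p) ω +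
    Eᶜ.indicator (μ[f | sigmaBar d R B η0 ρ0 n]) ω with hh_def
  have hg_int : Integrable (μ[f | sigmaBar d R B η0 ρ0 n]) μ := integrable_condExp
  have hint1 : Integrable (E.indicator fun _ => p) μ := (integrable_const p).indicator hE_meas
  have hint2 : Integrable (Eᶜ.indicator (μ[f | sigmaBar d R B η0 ρ0 n])) μ :=
    hg_int.indicator hE_meas.compl
  have hh_int : Integrable h μ := by
    rw [hh_def]
    exact hint1.add hint2
  have hh_sm : StronglyMeasurable[sigmaBar d R B η0 ρ0 n] h := by
    rw [hh_def]
    exact ((stronglyMeasurable_const).indicator hE_sb).add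
      (stronglyMeasurable_condExp.indicator hE_sb.compl)
  have hh_eq : ∀ S : Set Ω, MeasurableSet[sigmaBar d R B η0 ρ0 n] S → μ S < ∞ →
      ∫ ω in S, h ω ∂μ = ∫ ω in S, f ω ∂μ := by
    intro S hS _
    have hS0 : MeasurableSet S := hm S hS
    have hSEc : MeasurableSet[sigmaBar d R B η0 ρ0 n] (S ∩ Eᶜ) := hS.inter hE_sb.compl
    have hSE0 : MeasurableSet (S ∩ E) := hS0.inter hE_meas
    have hSEc0 : MeasurableSet (S ∩ Eᶜ) := hS0.inter hE_meas.compl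
    have hL : ∫ ω in S, h ω ∂μ = (μ (S ∩ E)).toReal * p +
        ∫ ω in S ∩ Eᶜ, (μ[f | sigmaBar d R B η0 ρ0 n]) ω ∂μ := by
      rw [hh_def]
      rw [integral_add hint1.integrableOn hint2.integrableOn]
      congr 1
      · rw [integral_indicator hE_meas, setIntegral_const, measureReal_restrict_apply hE_meas,
          smul_eq_mul, Set.inter_comm E S, measureReal_def]
      · rw [integral_indicator hE_meas.compl, Measure.restrict_restrict hE_meas.compl,
          Set.inter_comm Eᶜ S]
    have hIf : ∫ ω in S ∩ E, f ω ∂μ = (μ (S ∩ E)).toReal * p := by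
      rw [hsetint_f (S ∩ E) hSE0, hindep' S hS, ENNReal.toReal_mul, ENNReal.toReal_ofReal hp0]
    have hR : ∫ ω in S, f ω ∂μ = (μ (S ∩ E)).toReal * p + ∫ ω in S ∩ Eᶜ, f ω ∂μ := by
      have hsplit : ∫ ω in (S ∩ E) ∪ (S ∩ Eᶜ), f ω ∂μ =
          ∫ ω in S ∩ E, f ω ∂μ + ∫ ω in S ∩ Eᶜ, f ω ∂μ := by
        apply setIntegral_union _ hSEc0 hf_int.integrableOn hf_int.integrableOn
        exact Set.disjoint_of_subset Set.inter_subset_right Set.inter_subset_right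
          disjoint_compl_right
      rw [Set.inter_union_compl S E] at hsplit
      rw [hsplit, hIf]
    rw [hL, hR]
    congr 1
    exact setIntegral_condExp hm hf_int hSEc
  have hmain : h =ᵐ[μ] μ[f | sigmaBar d R B η0 ρ0 n] :=
    ae_eq_condExp_of_forall_setIntegral_eq hm hf_int
      (fun s _ _ => hh_int.integrableOn) hh_eq hh_sm.aestronglyMeasurable
  have h1 : ∀ᵐ ω ∂μ.restrict E, h ω = (μ[f | sigmaBar d R B η0 ρ0 n]) ω :=
    ae_restrict_of_ae hmain
  have h2 : ∀ᵐ ω ∂μ.restrict E, ω ∈ E := ae_restrict_mem hE_meas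
  filter_upwards [h1, h2] with ω hω hωE
  rw [← hω, hh_def]
  simp only [Set.indicator_of_mem hωE, Set.indicator_of_notMem (Set.notMem_compl_iff.mpr hωE),
    add_zero]

end
end

section
/- Let d = 2 or d = 3 and θ ∈ (0,1], and for each R ∈ ℕ let p = p(R) satisfy V(R)·p(R) = 1 + θ/R^{d−1}. Let Z be the branching random walk on ℤ^d_R with parameter p(R) started from a single particle at 0, and let R_n = {x ∈ ℤ^d/R : Σ_{j=1}^n Z_j({x}) > 0} be its range up to time n. Then for every c > 0 and K ∈ ℕ there is a constant A(c,K), nondecreasing in c and in K, such that for all R ∈ ℕ, all n ≤ c·R^{d−1}, and all r ≤ K·√n: P(R_n ∩ ([−r,r]^d)^c ≠ ∅) ≤ A(c,K)·(r+1)^{−2}. -/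
open MeasureTheory ProbabilityTheory Filter
open scoped ENNReal Classical

noncomputable section

/-- The neighbours of the origin in `ℤ^d_R`: `N(0) = {x : 0 < ‖x‖_∞ ≤ 1}`. -/
def Nbr (d R : ℕ) := {x : Vert d // adj d R 0 x}

instance (d R : ℕ) : MeasurableSpace (Nbr d R) := ⊤

/-- Labels for potential particles of the branching random walk:
finite nonempty sequences of elements of `N(0)`. -/
def BrwIdx (d R : ℕ) := {l : List (Nbr d R) // l ≠ []}

/-- Evaluation of a family indexed by nonempty lists at an arbitrary list
(junk value `true` at the empty list, which is never used). -/
def bext {d R : ℕ} (b : BrwIdx d R → Bool) (l : List (Nbr d R)) : Bool :=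
  if h : l = [] then true else b ⟨l, h⟩

/-- `α` labels a particle alive in generation `n` of the branching random walk:
`α` has length `n` and `B^{(α_1,…,α_i)} = 1` for all `1 ≤ i ≤ n`. -/
def brwAlive {d R : ℕ} (b : BrwIdx d R → Bool) (n : ℕ) (α : List (Nbr d R)) : Prop :=
  α.length = n ∧ ∀ k : ℕ, 0 < k → k ≤ n → bext b (α.take k) = true

/-- The position `Y^α = α_1 + ⋯ + α_n` of the particle labelled `α`. -/
def brwPos {d R : ℕ} (α : List (Nbr d R)) : Vert d :=
  (α.map Subtype.val).sum

/-- `Z_n({x})`: the number of particles of the branching random walk alive in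
generation `n` and located at `x`. -/
def brwZ {d R : ℕ} (b : BrwIdx d R → Bool) (n : ℕ) (x : Vert d) : ℕ :=
  Set.ncard {α : List (Nbr d R) | brwAlive b n α ∧ brwPos α = x}

/-- The variables `{B^α}`, indexed by finite nonempty sequences of elements of `N(0)`,
form an i.i.d. Bernoulli(p) family under `μ`. -/
def IsBrwField {Ω : Type} [MeasurableSpace Ω] (μ : Measure Ω) (d R : ℕ) (p : ℝ)
    (b : Ω → BrwIdx d R → Bool) : Prop :=
  (∀ α, Measurable fun ω => b ω α) ∧
  iIndepFun (m := fun _ => ⊤) (fun α ω => b ω α) μ ∧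
  (∀ α, μ {ω | b ω α = true} = ENNReal.ofReal p)

/-! ### Auxiliary: finiteness and counting -/

instance (d R : ℕ) : Countable (Nbr d R) := by
  unfold Nbr; infer_instance

def NbrBox (d R : ℕ) : Finset (Vert d) :=
  Fintype.piFinset (fun _ : Fin d => Finset.Icc (-(R:ℤ)) R)

lemma mem_NbrBox_erase_iff {d R : ℕ} (z : Vert d) :
    z ∈ (NbrBox d R).erase 0 ↔ adj d R 0 z := by
  simp only [NbrBox, Finset.mem_erase, Fintype.mem_piFinset, Finset.mem_Icc, adj]
  constructor
  · rintro ⟨h0, h⟩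
    refine ⟨h0.symm, fun i => ?_⟩
    have := h i
    simp only [Pi.zero_apply, zero_sub, abs_neg]
    rw [abs_le]; omega
  · rintro ⟨h0, h⟩
    refine ⟨h0.symm, fun i => ?_⟩
    have := h i
    simp only [Pi.zero_apply, zero_sub, abs_neg, abs_le] at this
    omega

instance (d R : ℕ) : Fintype (Nbr d R) := by
  unfold Nbr
  apply Fintype.subtype ((NbrBox d R).erase 0)
  exact fun z => mem_NbrBox_erase_iff z

lemma card_NbrBox (d R : ℕ) : (NbrBox d R).card = (2*R+1)^d := by
  simp only [NbrBox, Fintype.card_piFinset, Int.card_Icc]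
  rw [Finset.prod_const, Finset.card_univ, Fintype.card_fin]
  congr 1
  omega

lemma zero_mem_NbrBox (d R : ℕ) : (0 : Vert d) ∈ NbrBox d R := by
  simp [NbrBox, Fintype.mem_piFinset]

lemma card_NbrBox_erase (d R : ℕ) : ((NbrBox d R).erase 0).card = numNbr d R := by
  rw [Finset.card_erase_of_mem (zero_mem_NbrBox d R), card_NbrBox, numNbr]

lemma sum_nbr_eq {d R : ℕ} (f : Vert d → ℝ) :
    ∑ y : Nbr d R, f y.val = ∑ z ∈ (NbrBox d R).erase 0, f z := by
  unfold Nbr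
  exact (Finset.sum_subtype ((NbrBox d R).erase 0) (fun z => mem_NbrBox_erase_iff z) f).symm

lemma prod_nbr_eq {d R : ℕ} (f : Vert d → ℝ) :
    ∏ y : Nbr d R, f y.val = ∏ z ∈ (NbrBox d R).erase 0, f z := by
  unfold Nbr
  exact (Finset.prod_subtype ((NbrBox d R).erase 0) (fun z => mem_NbrBox_erase_iff z) f).symm


def psiB (u : ℝ) : ℝ := 10000 / (max u 0 + 100)^2

lemma psiB_denom_pos (u : ℝ) : (0:ℝ) < max u 0 + 100 := by
  have : (0:ℝ) ≤ max u 0 := le_max_right _ _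
  linarith

lemma psiB_pos (u : ℝ) : 0 < psiB u := by
  have := psiB_denom_pos u
  unfold psiB; positivity

lemma psiB_le_one (u : ℝ) : psiB u ≤ 1 := by
  have h := psiB_denom_pos u
  have h2 : (100:ℝ) ≤ max u 0 + 100 := by
    have : (0:ℝ) ≤ max u 0 := le_max_right _ _
    linarith
  rw [psiB, div_le_one (by positivity)]
  nlinarith

lemma psiB_anti {u v : ℝ} (h : u ≤ v) : psiB v ≤ psiB u := by
  have h1 := psiB_denom_pos u
  have h2 := psiB_denom_pos v
  have h3 : max u 0 ≤ max v 0 := max_le_max h le_rfl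
  rw [psiB, psiB, div_le_div_iff₀ (by positivity) (by positivity)]
  nlinarith

lemma psiB_of_nonpos {u : ℝ} (h : u ≤ 0) : psiB u = 1 := by
  rw [psiB, max_eq_right h]
  norm_num

lemma psiB_pos_of_lt_one {u : ℝ} (h : psiB u < 1) : 0 < u := by
  by_contra hc
  push_neg at hc
  rw [psiB_of_nonpos hc] at h
  exact lt_irrefl _ h

lemma psiB_of_nonneg {u : ℝ} (h : 0 ≤ u) : psiB u = 10000 / (u + 100)^2 := by
  rw [psiB, max_eq_left h]

/-- Second difference bound. -/
lemma psiB_second_diff {u s : ℝ} (hu : 0 < u) (hs0 : 0 ≤ s) (hs1 : s ≤ 1) :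
    psiB (u + s) + psiB (u - s) ≤ 2 * psiB u + (63/10) * s^2 * (psiB u)^2 / 10000 := by
  set A : ℝ := u + 100 with hA
  have hA100 : (100:ℝ) ≤ A := by simp only [hA]; linarith
  have hB : (10000:ℝ) ≤ A^2 := by nlinarith
  have ht : s^2 ≤ 1 := by nlinarith
  have hAp : (0:ℝ) < A + s := by linarith
  have hAm : (0:ℝ) < A - s := by linarith
  have hA0 : (0:ℝ) < A := by linarith
  have h1 : psiB (u + s) = 10000 / (A + s)^2 := by
    rw [psiB_of_nonneg (by linarith), hA]; ring_nf
  have h2 : psiB (u - s) ≤ 10000 / (A - s)^2 := by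
    rcases le_or_gt 0 (u - s) with h | h
    · rw [psiB_of_nonneg h]
      apply div_le_div_of_nonneg_left (by norm_num) (by nlinarith) (by nlinarith)
    · rw [psiB_of_nonpos h.le]
      rw [le_div_iff₀ (by positivity)]
      nlinarith
  have h3 : psiB u = 10000 / A^2 := by rw [psiB_of_nonneg hu.le]
  rw [h1, h3]
  have key : 10000 / (A + s)^2 + 10000 / (A - s)^2 ≤
      2 * (10000 / A^2) + (63/10) * s^2 * (10000 / A^2)^2 / 10000 := by
    have e1 : 10000 / (A + s)^2 + 10000 / (A - s)^2
        = 10000*(2*A^2+2*s^2) / ((A+s)^2*(A-s)^2) := by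
      field_simp
      ring
    have e2 : 2 * (10000 / A^2) + (63/10) * s^2 * (10000 / A^2)^2 / 10000
        = (20000*A^2 + 63000*s^2) / (A^2*A^2) := by
      field_simp
      ring
    rw [e1, e2, div_le_div_iff₀ (by positivity) (by positivity)]
    have hq : (A+s)^2*(A-s)^2 = (A^2 - s^2)^2 := by ring
    rw [hq]
    have hBt : A^2 * s^2 ≤ A^2 * 1 := by nlinarith
    nlinarith [mul_le_mul_of_nonneg_left hB (by positivity : (0:ℝ) ≤ 3000 * A^2),
      mul_le_mul_of_nonneg_left hBt (by norm_num : (0:ℝ) ≤ 106000),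
      mul_pos hA0 hA0, sq_nonneg s, sq_nonneg (s*s), mul_nonneg (mul_nonneg hs0 hs0) hs0]
  linarith [key, h2]

lemma div_ratio_aux {a b : ℝ} (ha : 0 < a) (hb : 0 < b) (h : 99*b ≤ 100*a) :
    10000/a^2 ≤ (100/99)^2 * (10000/b^2) := by
  have e : (100/99:ℝ)^2 * (10000/b^2) = 10000/((99/100)*b)^2 := by
    field_simp
  rw [e]
  apply div_le_div_of_nonneg_left (by norm_num) (by positivity)
  nlinarith

/-- Ratio bound: ψ(v) ≤ (100/99)^2 ψ(u) whenever v ≥ u - 1. -/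
lemma psiB_ratio {u v : ℝ} (h : u - 1 ≤ v) : psiB v ≤ (100/99)^2 * psiB u := by
  refine (psiB_anti h).trans ?_
  have h4 : (0:ℝ) ≤ max u 0 := le_max_right _ _
  have hMu : max u 0 - 1 ≤ max (u-1) 0 := by
    rcases le_or_gt u 1 with h' | h'
    · have hm : max u 0 ≤ 1 := max_le (by linarith) (by norm_num)
      have hm2 : (0:ℝ) ≤ max (u-1) 0 := le_max_right _ _
      linarith
    · rw [max_eq_left (by linarith : (0:ℝ) ≤ u - 1), max_eq_left (by linarith : (0:ℝ) ≤ u)]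
  rw [psiB, psiB]
  exact div_ratio_aux (psiB_denom_pos (u-1)) (psiB_denom_pos u) (by linarith)

/-- exp bound 1: for `0 ≤ t ≤ 1/100`, `exp (-(t+t^2)) ≤ 1 - t`. -/
lemma exp_bound_one {t : ℝ} (h0 : 0 ≤ t) (h1 : t ≤ 1/100) :
    Real.exp (-(t + t^2)) ≤ 1 - t := by
  have key : 1 ≤ (1 - t) * Real.exp (t + t^2) := by
    have hq : Real.exp ((t+t^2)/2) ≥ 1 + (t+t^2)/2 := by
      linarith [Real.add_one_le_exp ((t+t^2)/2)]
    have hsq : Real.exp (t + t^2) = Real.exp ((t+t^2)/2) * Real.exp ((t+t^2)/2) := by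
      rw [← Real.exp_add]; ring_nf
    have hpos : (0:ℝ) ≤ 1 + (t+t^2)/2 := by nlinarith
    have h2 : Real.exp (t+t^2) ≥ (1 + (t+t^2)/2)^2 := by
      rw [hsq]
      nlinarith [hq, Real.exp_pos ((t+t^2)/2)]
    have ha : t^3 ≤ t^2 * (1/100) := by nlinarith [sq_nonneg t]
    have hb : t^4 ≤ t^2 * (1/100) := by nlinarith [sq_nonneg t, sq_nonneg (t*t)]
    have hc : t^5 ≤ t^2 * (1/100) := by nlinarith [sq_nonneg t, sq_nonneg (t*t), mul_nonneg (mul_nonneg h0 h0) h0]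
    have h3 : (1 - t) * (1 + (t+t^2)/2)^2 ≥ 1 := by nlinarith [ha, hb, hc, sq_nonneg t]
    nlinarith [h2, h3, sub_nonneg.mpr h1]
  have hepos := Real.exp_pos (t + t^2)
  rw [Real.exp_neg]
  rw [inv_le_iff_one_le_mul₀ hepos]
  linarith [key]

/-- exp bound 2: for `0 ≤ x ≤ 2`, `1 - exp (-x) ≤ x - x^2/4`. -/
lemma exp_bound_two {x : ℝ} (h0 : 0 ≤ x) (h1 : x ≤ 2) :
    1 - Real.exp (-x) ≤ x - x^2/4 := by
  have hq : (1 - x/4 : ℝ) ≤ Real.exp (-(x/4)) := by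
    linarith [Real.add_one_le_exp (-(x/4))]
  have hp : (0:ℝ) ≤ 1 - x/4 := by linarith
  have h4 : Real.exp (-x) = (Real.exp (-(x/4)))^4 := by
    rw [← Real.exp_nat_mul]
    congr 1
    push_cast
    ring
  have hpow : (1 - x/4)^4 ≤ (Real.exp (-(x/4)))^4 := by
    apply pow_le_pow_left₀ hp hq
  rw [h4]
  nlinarith [hpow]

/-! ### The potential function φ and g -/

def phiB (d R : ℕ) (ε r : ℝ) (x : Vert d) : ℝ :=
  10*ε + ∑ i : Fin d, (psiB (r - (x i : ℝ)/(R:ℝ)) + psiB (r + (x i : ℝ)/(R:ℝ)))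

def ggB (d R : ℕ) (ε r : ℝ) (x : Vert d) : ℝ := min 1 (phiB d R ε r x)

def isOutB (R : ℕ) (r : ℝ) {d : ℕ} (x : Vert d) : Prop := ∃ i, r < |(x i : ℝ)| / R

section PhiFacts

variable {d R : ℕ} {ε r : ℝ}

lemma psiB_pair_nonneg (u v : ℝ) : (0:ℝ) ≤ psiB u + psiB v := by
  have := psiB_pos u; have := psiB_pos v; linarith

lemma phiB_ge (x : Vert d) : 10*ε ≤ phiB d R ε r x := by
  have h : (0:ℝ) ≤ ∑ i : Fin d, (psiB (r - (x i : ℝ)/(R:ℝ)) + psiB (r + (x i : ℝ)/(R:ℝ))) :=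
    Finset.sum_nonneg fun i _ => psiB_pair_nonneg _ _
  simp only [phiB]; linarith

lemma phiB_nonneg (hε : 0 ≤ ε) (x : Vert d) : 0 ≤ phiB d R ε r x :=
  le_trans (by linarith) (phiB_ge x)

lemma ggB_nonneg (hε : 0 ≤ ε) (x : Vert d) : 0 ≤ ggB d R ε r x :=
  le_min (by norm_num) (phiB_nonneg hε x)

lemma ggB_le_one (x : Vert d) : ggB d R ε r x ≤ 1 := min_le_left _ _

lemma ggB_le_phiB (x : Vert d) : ggB d R ε r x ≤ phiB d R ε r x := min_le_right _ _

/-- a single pair is at most the full sum of pairs -/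
lemma pair_le_sum (x : Vert d) (i : Fin d) :
    psiB (r - (x i : ℝ)/(R:ℝ)) + psiB (r + (x i : ℝ)/(R:ℝ)) ≤
      ∑ j : Fin d, (psiB (r - (x j : ℝ)/(R:ℝ)) + psiB (r + (x j : ℝ)/(R:ℝ))) :=
  Finset.single_le_sum
    (f := fun j : Fin d => psiB (r - (x j : ℝ)/(R:ℝ)) + psiB (r + (x j : ℝ)/(R:ℝ)))
    (fun j _ => psiB_pair_nonneg _ _) (Finset.mem_univ i)

lemma phiB_ge_one_of_isOut (hε : 0 ≤ ε) (hout : isOutB R r x) :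
    1 ≤ phiB d R ε r x := by
  obtain ⟨i, hi⟩ := hout
  have key : (1:ℝ) ≤ psiB (r - (x i : ℝ)/(R:ℝ)) + psiB (r + (x i : ℝ)/(R:ℝ)) := by
    rcases le_or_gt 0 ((x i : ℝ)) with h | h
    · have habs : |(x i : ℝ)| = (x i : ℝ) := abs_of_nonneg h
      rw [habs] at hi
      have hneg : r - (x i : ℝ)/(R:ℝ) ≤ 0 := by linarith
      rw [psiB_of_nonpos hneg]
      linarith [psiB_pos (r + (x i : ℝ)/(R:ℝ))]
    · have habs : |(x i : ℝ)| = -(x i : ℝ) := abs_of_neg h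
      rw [habs] at hi
      have hneg : r + (x i : ℝ)/(R:ℝ) ≤ 0 := by
        have : r < (-(x i : ℝ))/(R:ℝ) := hi
        have : r < -((x i : ℝ)/(R:ℝ)) := by rw [← neg_div]; exact this
        linarith
      rw [psiB_of_nonpos hneg]
      linarith [psiB_pos (r - (x i : ℝ)/(R:ℝ))]
  have hps := pair_le_sum (R := R) (r := r) x i
  simp only [phiB]
  linarith

lemma ggB_eq_one_of_isOut (hε : 0 ≤ ε) (hout : isOutB R r x) :
    ggB d R ε r x = 1 :=
  min_eq_left (phiB_ge_one_of_isOut hε hout)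

/-! ### Coordinate marginal sums over the box -/

lemma card_Icc_R (R : ℕ) : ((Finset.Icc (-(R:ℤ)) R).card : ℝ) = 2*(R:ℝ)+1 := by
  rw [Int.card_Icc]
  have : (R:ℤ) + 1 - (-(R:ℤ)) = 2*(R:ℤ)+1 := by ring
  rw [this]
  have : ((2*(R:ℤ)+1).toNat : ℤ) = 2*(R:ℤ)+1 := Int.toNat_of_nonneg (by positivity)
  push_cast at this ⊢
  exact_mod_cast this

lemma sum_box_coord {d R : ℕ} (h : ℤ → ℝ) (i₀ : Fin d) :
    ∑ z ∈ NbrBox d R, h (z i₀)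
      = (2*(R:ℝ)+1)^(d-1) * ∑ t ∈ Finset.Icc (-(R:ℤ)) R, h t := by
  classical
  have main := Finset.prod_univ_sum (fun _ : Fin d => Finset.Icc (-(R:ℤ)) R)
    (fun i t => if i = i₀ then h t else 1)
  have hR : ∀ z : Vert d, (∏ i : Fin d, if i = i₀ then h (z i) else 1) = h (z i₀) := by
    intro z
    rw [Finset.prod_ite_eq' Finset.univ i₀ (fun i => h (z i))]
    simp
  have hL : (∏ i : Fin d, ∑ t ∈ Finset.Icc (-(R:ℤ)) R, if i = i₀ then h t else 1)
      = (∑ t ∈ Finset.Icc (-(R:ℤ)) R, h t) * (2*(R:ℝ)+1)^(d-1) := by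
    rw [← Finset.mul_prod_erase Finset.univ _ (Finset.mem_univ i₀)]
    have h1 : (∑ t ∈ Finset.Icc (-(R:ℤ)) R, if i₀ = i₀ then h t else 1)
        = ∑ t ∈ Finset.Icc (-(R:ℤ)) R, h t := by simp
    have h2 : ∀ i ∈ Finset.univ.erase i₀,
        (∑ t ∈ Finset.Icc (-(R:ℤ)) R, if i = i₀ then h t else 1) = 2*(R:ℝ)+1 := by
      intro i hi
      have hne : i ≠ i₀ := (Finset.mem_erase.mp hi).1
      simp only [if_neg hne]
      rw [Finset.sum_const, nsmul_eq_mul, mul_one, card_Icc_R]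
    rw [h1, Finset.prod_congr rfl h2, Finset.prod_const]
    congr 1
    rw [Finset.card_erase_of_mem (Finset.mem_univ i₀), Finset.card_univ, Fintype.card_fin]
  calc ∑ z ∈ NbrBox d R, h (z i₀)
      = ∑ z ∈ NbrBox d R, ∏ i : Fin d, if i = i₀ then h (z i) else 1 := by
        exact Finset.sum_congr rfl fun z _ => (hR z).symm
    _ = ∏ i : Fin d, ∑ t ∈ Finset.Icc (-(R:ℤ)) R, if i = i₀ then h t else 1 := main.symm
    _ = (2*(R:ℝ)+1)^(d-1) * ∑ t ∈ Finset.Icc (-(R:ℤ)) R, h t := by rw [hL, mul_comm]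

lemma sum_Icc_neg_reindex {R : ℕ} (f : ℤ → ℝ) :
    ∑ t ∈ Finset.Icc (-(R:ℤ)) R, f (-t) = ∑ t ∈ Finset.Icc (-(R:ℤ)) R, f t := by
  apply Finset.sum_nbij' (fun t => -t) (fun t => -t) <;>
    simp [Finset.mem_Icc] <;> intros <;> omega

/-- Key one-dimensional bound. -/
lemma sum_Icc_psiB {R : ℕ} (hR : 0 < R) {u : ℝ} (hu : 0 < u) :
    ∑ t ∈ Finset.Icc (-(R:ℤ)) R, psiB (u + (t:ℝ)/(R:ℝ))
      ≤ (2*(R:ℝ)+1) * (psiB u + (63/20) * (psiB u)^2/10000) := by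
  have hRR : (0:ℝ) < (R:ℝ) := by exact_mod_cast hR
  have e2 : ∑ t ∈ Finset.Icc (-(R:ℤ)) R, psiB (u - (t:ℝ)/(R:ℝ))
      = ∑ t ∈ Finset.Icc (-(R:ℤ)) R, psiB (u + (t:ℝ)/(R:ℝ)) := by
    rw [← sum_Icc_neg_reindex (R := R) (fun t => psiB (u + (t:ℝ)/(R:ℝ)))]
    refine Finset.sum_congr rfl fun t _ => ?_
    congr 1
    push_cast
    ring
  have hhalf : ∑ t ∈ Finset.Icc (-(R:ℤ)) R, psiB (u + (t:ℝ)/(R:ℝ))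
      = ∑ t ∈ Finset.Icc (-(R:ℤ)) R,
          (psiB (u + (t:ℝ)/(R:ℝ)) + psiB (u - (t:ℝ)/(R:ℝ)))/2 := by
    have hd : ∑ t ∈ Finset.Icc (-(R:ℤ)) R,
          (psiB (u + (t:ℝ)/(R:ℝ)) + psiB (u - (t:ℝ)/(R:ℝ)))/2
        = ((∑ t ∈ Finset.Icc (-(R:ℤ)) R, psiB (u + (t:ℝ)/(R:ℝ)))
            + ∑ t ∈ Finset.Icc (-(R:ℤ)) R, psiB (u - (t:ℝ)/(R:ℝ)))/2 := by
      rw [← Finset.sum_add_distrib, Finset.sum_div]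
    rw [hd, e2]
    ring
  rw [hhalf]
  have hbound : ∀ t ∈ Finset.Icc (-(R:ℤ)) R,
      (psiB (u + (t:ℝ)/(R:ℝ)) + psiB (u - (t:ℝ)/(R:ℝ)))/2
        ≤ psiB u + (63/20) * (psiB u)^2/10000 := by
    intro t ht
    rw [Finset.mem_Icc] at ht
    have habs : |(t:ℝ)/(R:ℝ)| ≤ 1 := by
      rw [abs_div, abs_of_pos hRR, div_le_one hRR]
      have : |(t:ℝ)| ≤ (R:ℝ) := by
        rw [← Int.cast_abs]
        exact_mod_cast abs_le.mpr ht
      exact this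
    set s := |(t:ℝ)/(R:ℝ)| with hs
    have hs0 : 0 ≤ s := abs_nonneg _
    have hkey := psiB_second_diff hu hs0 habs
    have hcases : psiB (u + (t:ℝ)/(R:ℝ)) + psiB (u - (t:ℝ)/(R:ℝ)) = psiB (u+s) + psiB (u-s) := by
      rcases abs_cases ((t:ℝ)/(R:ℝ)) with ⟨he, _⟩ | ⟨he, _⟩
      · rw [hs, he]
      · rw [hs, he]; ring_nf
    rw [hcases]
    have hs1 : s^2 ≤ 1 := by nlinarith
    have hψ := psiB_pos u
    nlinarith [hkey]
  calc ∑ t ∈ Finset.Icc (-(R:ℤ)) R,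
        (psiB (u + (t:ℝ)/(R:ℝ)) + psiB (u - (t:ℝ)/(R:ℝ)))/2
      ≤ ∑ _t ∈ Finset.Icc (-(R:ℤ)) R, (psiB u + (63/20) * (psiB u)^2/10000) :=
        Finset.sum_le_sum hbound
    _ = (2*(R:ℝ)+1) * (psiB u + (63/20) * (psiB u)^2/10000) := by
        rw [Finset.sum_const, nsmul_eq_mul, card_Icc_R]

end PhiFacts

lemma numNbr_cast (d R : ℕ) : (numNbr d R : ℝ) = (2*(R:ℝ)+1)^d - 1 := by
  have h1 : 1 ≤ (2*R+1)^d := Nat.one_le_pow _ _ (by omega)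
  rw [numNbr, Nat.cast_sub h1]
  push_cast
  ring

/-- numeric helper 1 -/
lemma numeric1 {ε φ p SA X : ℝ} (hε0 : 0 ≤ ε) (hε : ε ≤ 1/100) (hp0 : 0 ≤ p) (hp : p ≤ 1/4500)
    (hφ0 : 0 ≤ φ) (hφ1 : φ < 1) (hφε : 10*ε ≤ φ) (hSA0 : 0 ≤ SA)
    (hSAb : SA ≤ (1+ε) * φ + (32/100000) * φ^2)
    (hXle : X ≤ SA * (1 + p * ((100/99)^2 * φ))) :
    X ≤ φ * (1 + (102/1000) * φ) := by
  have hPG : p * ((100/99)^2 * φ) ≤ (227/1000000) * φ := by nlinarith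
  have hmono : SA * (1 + p * ((100/99)^2 * φ)) ≤ SA * (1 + (227/1000000) * φ) := by
    apply mul_le_mul_of_nonneg_left _ hSA0
    linarith
  have hεφ : ε * φ ≤ φ^2/10 := by nlinarith
  have hnum : ((1+ε) * φ + (32/100000) * φ^2) * (1 + (227/1000000) * φ)
      ≤ φ * (1 + (102/1000) * φ) := by nlinarith [sq_nonneg φ, hφ0, hφ1.le, hεφ, hε0, hε]
  have hSAmono : SA * (1 + (227/1000000) * φ)
      ≤ ((1+ε) * φ + (32/100000) * φ^2) * (1 + (227/1000000) * φ) := by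
    apply mul_le_mul_of_nonneg_right hSAb
    nlinarith
  linarith

/-- numeric helper 2 -/
lemma numeric2 {φ X P : ℝ} (hφ0 : 0 ≤ φ) (hφ1 : φ < 1) (hX0 : 0 ≤ X)
    (hXfin : X ≤ φ * (1 + (102/1000) * φ)) (hP : Real.exp (-X) ≤ P) :
    1 - P ≤ φ := by
  have hs0 : φ * (1 + (102/1000) * φ) ≤ 2 := by nlinarith
  have hX2 : X ≤ 2 := by linarith
  have h2 := exp_bound_two hX0 hX2
  have h3 : X - X^2/4 ≤ (φ * (1 + (102/1000) * φ)) - (φ * (1 + (102/1000) * φ))^2/4 := by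
    nlinarith [hXfin, hX0, hs0]
  have h4 : (φ * (1 + (102/1000) * φ)) - (φ * (1 + (102/1000) * φ))^2/4 ≤ φ := by
    nlinarith [sq_nonneg φ, hφ0, hφ1.le]
  linarith

/-- numeric helper 3 -/
lemma numeric3 {ε p C φ S : ℝ} (hε : ε ≤ 1/100) (hp : p ≤ 1/4500) (hε0 : 0 ≤ ε) (hp0 : 0 ≤ p)
    (hpC : p * C = 1 + ε + p) (hφ0 : 0 ≤ φ)
    (hS : S ≤ C * (φ + (63/20) * φ^2/10000) - φ) :
    p * S ≤ (1+ε) * φ + (32/100000) * φ^2 := by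
  have h2 : p * S ≤ p * (C * (φ + (63/20) * φ^2/10000) - φ) :=
    mul_le_mul_of_nonneg_left hS hp0
  have h3 : p * (C * (φ + (63/20) * φ^2/10000) - φ)
      = (1+ε+p) * (φ + (63/20) * φ^2/10000) - p*φ := by
    rw [← hpC]; ring
  have h4 : (1+ε+p) * (φ + (63/20) * φ^2/10000) - p*φ
      ≤ (1+ε) * φ + (32/100000) * φ^2 := by nlinarith [sq_nonneg φ]
  linarith

set_option maxHeartbeats 1000000 in
/-- The supersolution property: one step of the recursion preserves the bound `g`. -/
lemma coreB {d R : ℕ} (hd1 : 1 ≤ d) (hR : 0 < R) {ε p r : ℝ}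
    (hε0 : 0 ≤ ε) (hε : ε ≤ 1/100) (hp0 : 0 ≤ p) (hp : p ≤ 1/4500)
    (hVp : (numNbr d R : ℝ) * p = 1 + ε) (x : Vert d) :
    1 - ∏ z ∈ (NbrBox d R).erase 0, (1 - p * ggB d R ε r (x+z)) ≤ ggB d R ε r x := by
  have hRR : (0:ℝ) < (R:ℝ) := by exact_mod_cast hR
  -- every factor is in [0,1]
  have hfac : ∀ z : Vert d, 0 ≤ 1 - p * ggB d R ε r (x+z) := by
    intro z
    have h1 := ggB_le_one (d := d) (R := R) (ε := ε) (r := r) (x+z)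
    have h2 := ggB_nonneg (R := R) (r := r) hε0 (x+z)
    nlinarith
  have hprod_nonneg : 0 ≤ ∏ z ∈ (NbrBox d R).erase 0, (1 - p * ggB d R ε r (x+z)) :=
    Finset.prod_nonneg fun z _ => hfac z
  rcases le_or_gt 1 (phiB d R ε r x) with hphi | hphi
  · -- trivial case
    rw [ggB, min_eq_left hphi]
    linarith
  -- main case : φ x < 1
  set φ := phiB d R ε r x with hφdef
  have hφ0 : 0 ≤ φ := phiB_nonneg hε0 x
  have hφε : 10*ε ≤ φ := phiB_ge x
  set U : Fin d → ℝ := fun i => r - (x i : ℝ)/(R:ℝ) with hU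
  set Vv : Fin d → ℝ := fun i => r + (x i : ℝ)/(R:ℝ) with hV
  set T : ℝ := ∑ i : Fin d, (psiB (U i) + psiB (Vv i)) with hT
  have hφT : φ = 10*ε + T := rfl
  have hT0 : 0 ≤ T := Finset.sum_nonneg fun i _ => psiB_pair_nonneg _ _
  have hpair_le : ∀ i, psiB (U i) + psiB (Vv i) ≤ T := fun i => pair_le_sum x i
  have hUpos : ∀ i, 0 < U i := by
    intro i
    apply psiB_pos_of_lt_one
    have := hpair_le i
    have := psiB_pos (Vv i)
    have : psiB (U i) ≤ T := by linarith
    linarith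
  have hVpos : ∀ i, 0 < Vv i := by
    intro i
    apply psiB_pos_of_lt_one
    have := hpair_le i
    have := psiB_pos (U i)
    have : psiB (Vv i) ≤ T := by linarith
    linarith
  -- expansion of φ at neighbours
  have expand : ∀ z : Vert d, phiB d R ε r (x+z)
      = 10*ε + ∑ i : Fin d, (psiB (U i - (z i : ℝ)/(R:ℝ)) + psiB (Vv i + (z i : ℝ)/(R:ℝ))) := by
    intro z
    simp only [phiB]
    congr 1
    refine Finset.sum_congr rfl fun i _ => ?_
    have hxz : (((x+z) i : ℤ) : ℝ) = (x i : ℝ) + (z i : ℝ) := by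
      simp [Pi.add_apply]
    rw [hxz]
    have e1 : r - ((x i : ℝ) + (z i : ℝ))/(R:ℝ) = U i - (z i : ℝ)/(R:ℝ) := by
      simp only [hU]; ring
    have e2 : r + ((x i : ℝ) + (z i : ℝ))/(R:ℝ) = Vv i + (z i : ℝ)/(R:ℝ) := by
      simp only [hV]; ring
    rw [e1, e2]
  -- sum of φ over the whole box
  have hCpow : (2*(R:ℝ)+1)^(d-1) * (2*(R:ℝ)+1) = (2*(R:ℝ)+1)^d := by
    rw [← pow_succ]
    congr 1
    omega
  have hC0 : (0:ℝ) ≤ (2*(R:ℝ)+1)^d := by positivity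
  have hC0' : (0:ℝ) ≤ (2*(R:ℝ)+1)^(d-1) := by positivity
  have hsumU : ∀ i : Fin d, ∑ z ∈ NbrBox d R, psiB (U i - (z i : ℝ)/(R:ℝ))
      ≤ (2*(R:ℝ)+1)^d * (psiB (U i) + (63/20) * (psiB (U i))^2/10000) := by
    intro i
    have e := sum_box_coord (d := d) (R := R) (fun t : ℤ => psiB (U i - (t:ℝ)/(R:ℝ))) i
    rw [e]
    have reind : ∑ t ∈ Finset.Icc (-(R:ℤ)) R, psiB (U i - (t:ℝ)/(R:ℝ))
        = ∑ t ∈ Finset.Icc (-(R:ℤ)) R, psiB (U i + (t:ℝ)/(R:ℝ)) := by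
      rw [← sum_Icc_neg_reindex (R := R) (fun t => psiB (U i + (t:ℝ)/(R:ℝ)))]
      refine Finset.sum_congr rfl fun t _ => ?_
      congr 1
      push_cast
      ring
    rw [reind, ← hCpow, mul_assoc]
    exact mul_le_mul_of_nonneg_left (sum_Icc_psiB hR (hUpos i)) hC0'
  have hsumV : ∀ i : Fin d, ∑ z ∈ NbrBox d R, psiB (Vv i + (z i : ℝ)/(R:ℝ))
      ≤ (2*(R:ℝ)+1)^d * (psiB (Vv i) + (63/20) * (psiB (Vv i))^2/10000) := by
    intro i
    have e := sum_box_coord (d := d) (R := R) (fun t : ℤ => psiB (Vv i + (t:ℝ)/(R:ℝ))) i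
    rw [e, ← hCpow, mul_assoc]
    exact mul_le_mul_of_nonneg_left (sum_Icc_psiB hR (hVpos i)) hC0'
  -- sum of squares bound
  have hsq : ∑ i : Fin d, ((psiB (U i))^2 + (psiB (Vv i))^2) ≤ T^2 := by
    have hterm : ∀ i ∈ Finset.univ, ((psiB (U i))^2 + (psiB (Vv i))^2)
        ≤ (psiB (U i) + psiB (Vv i)) * T := by
      intro i _
      have h1 := hpair_le i
      have h2 := psiB_pos (U i)
      have h3 := psiB_pos (Vv i)
      nlinarith
    calc ∑ i : Fin d, ((psiB (U i))^2 + (psiB (Vv i))^2)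
        ≤ ∑ i : Fin d, (psiB (U i) + psiB (Vv i)) * T := Finset.sum_le_sum hterm
      _ = T * T := by rw [← Finset.sum_mul, ← hT]
      _ = T^2 := by ring
  -- total box sum bound
  have SB : ∑ z ∈ NbrBox d R, phiB d R ε r (x+z)
      ≤ (2*(R:ℝ)+1)^d * (φ + (63/20) * φ^2/10000) := by
    have step1 : ∑ z ∈ NbrBox d R, phiB d R ε r (x+z)
        = ((NbrBox d R).card : ℝ) * (10*ε)
          + ∑ i : Fin d, ((∑ z ∈ NbrBox d R, psiB (U i - (z i : ℝ)/(R:ℝ)))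
              + ∑ z ∈ NbrBox d R, psiB (Vv i + (z i : ℝ)/(R:ℝ))) := by
      rw [Finset.sum_congr rfl (fun z _ => expand z), Finset.sum_add_distrib,
        Finset.sum_const, nsmul_eq_mul]
      congr 1
      rw [Finset.sum_comm]
      exact Finset.sum_congr rfl fun i _ => Finset.sum_add_distrib
    rw [step1]
    have hcard : ((NbrBox d R).card : ℝ) = (2*(R:ℝ)+1)^d := by
      rw [card_NbrBox]
      push_cast
      ring
    rw [hcard]
    have hmid_eq : (∑ i : Fin d, ((psiB (U i) + 63/20 * (psiB (U i))^2/10000)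
          + (psiB (Vv i) + 63/20 * (psiB (Vv i))^2/10000)))
        = T + 63/20 * (∑ i : Fin d, ((psiB (U i))^2 + (psiB (Vv i))^2))/10000 := by
      rw [hT, Finset.mul_sum, Finset.sum_div, ← Finset.sum_add_distrib]
      exact Finset.sum_congr rfl fun i _ => by ring
    have hmid : ∑ i : Fin d, ((∑ z ∈ NbrBox d R, psiB (U i - (z i : ℝ)/(R:ℝ)))
          + ∑ z ∈ NbrBox d R, psiB (Vv i + (z i : ℝ)/(R:ℝ)))
        ≤ (2*(R:ℝ)+1)^d * (T + (63/20) * (∑ i : Fin d, ((psiB (U i))^2 + (psiB (Vv i))^2))/10000) := by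
      calc ∑ i : Fin d, ((∑ z ∈ NbrBox d R, psiB (U i - (z i : ℝ)/(R:ℝ)))
              + ∑ z ∈ NbrBox d R, psiB (Vv i + (z i : ℝ)/(R:ℝ)))
          ≤ ∑ i : Fin d, ((2*(R:ℝ)+1)^d * ((psiB (U i) + (63/20) * (psiB (U i))^2/10000)
              + (psiB (Vv i) + (63/20) * (psiB (Vv i))^2/10000))) := by
            refine Finset.sum_le_sum fun i _ => ?_
            rw [mul_add]
            linarith [hsumU i, hsumV i]
        _ = (2*(R:ℝ)+1)^d * (T + (63/20) * (∑ i : Fin d, ((psiB (U i))^2 + (psiB (Vv i))^2))/10000) := by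
            rw [← Finset.mul_sum, hmid_eq]
    have hT2 : T^2 ≤ φ^2 := by nlinarith
    have hfin : (2*(R:ℝ)+1)^d * (T + (63/20) * (∑ i : Fin d, ((psiB (U i))^2 + (psiB (Vv i))^2))/10000)
        ≤ (2*(R:ℝ)+1)^d * (T + (63/20) * φ^2/10000) := by
      apply mul_le_mul_of_nonneg_left _ hC0
      have := hsq
      nlinarith
    have : (2*(R:ℝ)+1)^d * (10*ε) + (2*(R:ℝ)+1)^d * (T + (63/20) * φ^2/10000)
        = (2*(R:ℝ)+1)^d * (φ + (63/20) * φ^2/10000) := by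
      rw [hφT]; ring
    linarith
  -- bound on p * sum over erase of g
  have herase : ∑ z ∈ (NbrBox d R).erase 0, phiB d R ε r (x+z)
      = (∑ z ∈ NbrBox d R, phiB d R ε r (x+z)) - φ := by
    have h := Finset.sum_erase_add (NbrBox d R) (fun z => phiB d R ε r (x+z)) (zero_mem_NbrBox d R)
    beta_reduce at h
    rw [add_zero] at h
    linarith
  have hpC : p * (2*(R:ℝ)+1)^d = 1 + ε + p := by
    have := numNbr_cast d R
    nlinarith [hVp, this]
  have hSA : p * ∑ z ∈ (NbrBox d R).erase 0, ggB d R ε r (x+z)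
      ≤ (1+ε) * φ + (32/100000) * φ^2 := by
    have h1 : ∑ z ∈ (NbrBox d R).erase 0, ggB d R ε r (x+z)
        ≤ ∑ z ∈ (NbrBox d R).erase 0, phiB d R ε r (x+z) :=
      Finset.sum_le_sum fun z _ => ggB_le_phiB (x+z)
    have h5 : ∑ z ∈ (NbrBox d R).erase 0, ggB d R ε r (x+z)
        ≤ (2*(R:ℝ)+1)^d * (φ + (63/20) * φ^2/10000) - φ := by
      rw [herase] at h1
      linarith [SB]
    exact numeric3 hε hp hε0 hp0 hpC hφ0 h5
  -- ratio bound at neighbours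
  have hrat : ∀ z ∈ NbrBox d R, ggB d R ε r (x+z) ≤ (100/99)^2 * φ := by
    intro z hz
    have hzi : ∀ i, |(z i : ℝ)|/(R:ℝ) ≤ 1 := by
      intro i
      have : z i ∈ Finset.Icc (-(R:ℤ)) R := by
        simp only [NbrBox, Fintype.mem_piFinset] at hz
        exact hz i
      rw [Finset.mem_Icc] at this
      rw [div_le_one hRR, ← Int.cast_abs]
      exact_mod_cast abs_le.mpr this
    refine (ggB_le_phiB (x+z)).trans ?_
    rw [expand z]
    have hbound : ∑ i : Fin d, (psiB (U i - (z i : ℝ)/(R:ℝ)) + psiB (Vv i + (z i : ℝ)/(R:ℝ)))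
        ≤ (100/99)^2 * T := by
      rw [hT, Finset.mul_sum]
      refine Finset.sum_le_sum fun i _ => ?_
      have habs := hzi i
      have habs' : |(z i : ℝ)| ≤ (R:ℝ) := by
        rw [div_le_one hRR] at habs
        exact habs
      have hz1 : (z i : ℝ)/(R:ℝ) ≤ 1 := by
        have := neg_abs_le ((z i : ℝ))
        rw [div_le_one hRR]
        calc ((z i : ℤ):ℝ) ≤ |(z i : ℝ)| := le_abs_self _
          _ ≤ (R:ℝ) := habs'
      have hz2 : -1 ≤ (z i : ℝ)/(R:ℝ) := by
        rw [neg_le, ← neg_div, div_le_one hRR]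
        calc -((z i : ℤ):ℝ) ≤ |(z i : ℝ)| := neg_le_abs _
          _ ≤ (R:ℝ) := habs'
      have r1 : psiB (U i - (z i : ℝ)/(R:ℝ)) ≤ (100/99)^2 * psiB (U i) :=
        psiB_ratio (by linarith)
      have r2 : psiB (Vv i + (z i : ℝ)/(R:ℝ)) ≤ (100/99)^2 * psiB (Vv i) :=
        psiB_ratio (by linarith)
      rw [mul_add]
      linarith
    have hΓε : 10*ε ≤ (100/99)^2 * (10*ε) := by nlinarith
    calc 10*ε + ∑ i : Fin d, (psiB (U i - (z i : ℝ)/(R:ℝ)) + psiB (Vv i + (z i : ℝ)/(R:ℝ)))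
        ≤ (100/99)^2 * (10*ε) + (100/99)^2 * T := by linarith
      _ = (100/99)^2 * φ := by rw [hφT]; ring
  -- the exponent X
  set aZ : Vert d → ℝ := fun z => p * ggB d R ε r (x+z) with haZ
  have ha0 : ∀ z, 0 ≤ aZ z := fun z => mul_nonneg hp0 (ggB_nonneg (R := R) (r := r) hε0 (x+z))
  have ha1 : ∀ z, aZ z ≤ 1/100 := by
    intro z
    have h1 := ggB_le_one (d := d) (R := R) (ε := ε) (r := r) (x+z)
    have h2 := ggB_nonneg (R := R) (r := r) hε0 (x+z)
    simp only [haZ]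
    nlinarith
  set X : ℝ := ∑ z ∈ (NbrBox d R).erase 0, (aZ z + (aZ z)^2) with hX
  have hX0 : 0 ≤ X :=
    Finset.sum_nonneg fun z _ => by nlinarith [ha0 z, sq_nonneg (aZ z)]
  set SA : ℝ := ∑ z ∈ (NbrBox d R).erase 0, aZ z with hSAdef
  have hSA0 : 0 ≤ SA := Finset.sum_nonneg fun z _ => ha0 z
  have hSAb : SA ≤ (1+ε) * φ + (32/100000) * φ^2 := by
    rw [hSAdef]
    have : ∑ z ∈ (NbrBox d R).erase 0, aZ z
        = p * ∑ z ∈ (NbrBox d R).erase 0, ggB d R ε r (x+z) := by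
      rw [Finset.mul_sum]
    rw [this]
    exact hSA
  have hXle : X ≤ SA * (1 + p * ((100/99)^2 * φ)) := by
    rw [hX, hSAdef]
    have hstep : ∀ z ∈ (NbrBox d R).erase 0,
        aZ z + (aZ z)^2 ≤ aZ z * (1 + p * ((100/99)^2 * φ)) := by
      intro z hz
      have hz' : z ∈ NbrBox d R := Finset.mem_of_mem_erase hz
      have h1 : aZ z ≤ p * ((100/99)^2 * φ) :=
        mul_le_mul_of_nonneg_left (hrat z hz') hp0
      have h2 : aZ z * aZ z ≤ aZ z * (p * ((100/99)^2 * φ)) :=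
        mul_le_mul_of_nonneg_left h1 (ha0 z)
      rw [mul_add, mul_one, sq]
      linarith
    calc ∑ z ∈ (NbrBox d R).erase 0, (aZ z + (aZ z)^2)
        ≤ ∑ z ∈ (NbrBox d R).erase 0, aZ z * (1 + p * ((100/99)^2 * φ)) :=
          Finset.sum_le_sum hstep
      _ = (∑ z ∈ (NbrBox d R).erase 0, aZ z) * (1 + p * ((100/99)^2 * φ)) := by
          rw [Finset.sum_mul]
  have hXfin : X ≤ φ * (1 + (102/1000) * φ) :=
    numeric1 hε0 hε hp0 hp hφ0 hphi hφε hSA0 hSAb hXle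
  -- product lower bound via exp
  have hexp : Real.exp (-X) ≤ ∏ z ∈ (NbrBox d R).erase 0, (1 - aZ z) := by
    have hXsum : -X = ∑ z ∈ (NbrBox d R).erase 0, (-(aZ z + (aZ z)^2)) := by
      rw [hX, ← Finset.sum_neg_distrib]
    rw [hXsum, Real.exp_sum]
    refine Finset.prod_le_prod (fun z _ => (Real.exp_pos _).le) fun z _ => ?_
    exact exp_bound_one (ha0 z) (by linarith [ha1 z])
  have hfinal : 1 - ∏ z ∈ (NbrBox d R).erase 0, (1 - aZ z) ≤ φ :=
    numeric2 hφ0 hphi hX0 hXfin hexp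
  rw [ggB]
  rcases le_or_gt 1 φ with h | h
  · rw [min_eq_left h]; linarith
  · rw [min_eq_right h.le]; exact hfinal

/-! ### The exit events and their probabilities -/

section Prob

variable {d R : ℕ} {Ω : Type} [MeasurableSpace Ω]

/-- The event that some particle of the subtree rooted at prefix `β` (whose root sits at `x`,
already accounting steps) exits the box within `m` further generations. -/
def EvB (b : Ω → BrwIdx d R → Bool) (r : ℝ) : ℕ → Vert d → List (Nbr d R) → Set Ω
  | 0, x, _ => if isOutB R r x then Set.univ else ∅
  | (m+1), x, β =>
    if isOutB R r x then Set.univ else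
      ⋃ y : Nbr d R, ({ω | b ω ⟨β ++ [y], by simp⟩ = true} ∩
        EvB b r m (x + y.val) (β ++ [y]))

lemma EvB_out {b : Ω → BrwIdx d R → Bool} {r : ℝ} {m : ℕ} {x : Vert d}
    {β : List (Nbr d R)} (h : isOutB R r x) : EvB b r m x β = Set.univ := by
  cases m <;> simp [EvB, h]

lemma EvB_not_out {b : Ω → BrwIdx d R → Bool} {r : ℝ} {m : ℕ} {x : Vert d}
    {β : List (Nbr d R)} (h : ¬ isOutB R r x) :
    EvB b r (m+1) x β
      = ⋃ y : Nbr d R, ({ω | b ω ⟨β ++ [y], by simp⟩ = true} ∩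
          EvB b r m (x + y.val) (β ++ [y])) := by
  simp [EvB, h]

lemma EvB_zero_not_out {b : Ω → BrwIdx d R → Bool} {r : ℝ} {x : Vert d}
    {β : List (Nbr d R)} (h : ¬ isOutB R r x) : EvB b r 0 x β = ∅ := by
  simp [EvB, h]

/-- σ-algebra generated by a single variable of the field. -/
def sigAt (b : Ω → BrwIdx d R → Bool) (α : BrwIdx d R) : MeasurableSpace Ω :=
  MeasurableSpace.comap (fun ω => b ω α) ⊤

/-- proper extensions of `β` -/
def extSet (β : List (Nbr d R)) : Set (BrwIdx d R) :=
  {α | ∃ γ, γ ≠ [] ∧ α.val = β ++ γ}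

/-- labels starting with `β ++ [y]` (including `β ++ [y]` itself) -/
def TsetB (β : List (Nbr d R)) (y : Nbr d R) : Set (BrwIdx d R) :=
  {α | ∃ γ, α.val = β ++ y :: γ}

lemma append_y_ne_nil (β : List (Nbr d R)) (y : Nbr d R) : β ++ [y] ≠ [] := by simp

lemma mem_extSet_append (β : List (Nbr d R)) (y : Nbr d R) :
    (⟨β ++ [y], append_y_ne_nil β y⟩ : BrwIdx d R) ∈ extSet β :=
  ⟨[y], by simp, rfl⟩

lemma mem_TsetB_self (β : List (Nbr d R)) (y : Nbr d R) :
    (⟨β ++ [y], append_y_ne_nil β y⟩ : BrwIdx d R) ∈ TsetB β y :=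
  ⟨[], rfl⟩

lemma extSet_append_subset (β : List (Nbr d R)) (y : Nbr d R) :
    extSet (β ++ [y]) ⊆ extSet β := by
  rintro α ⟨γ, hγ, hval⟩
  exact ⟨[y] ++ γ, by simp, by rw [hval, List.append_assoc]⟩

lemma extSet_append_subset_TsetB (β : List (Nbr d R)) (y : Nbr d R) :
    extSet (β ++ [y]) ⊆ TsetB β y := by
  rintro α ⟨γ, hγ, hval⟩
  exact ⟨γ, by rw [hval, List.append_assoc]; rfl⟩

lemma TsetB_disjoint (β : List (Nbr d R)) {y y' : Nbr d R} (h : y ≠ y') :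
    Disjoint (TsetB β y) (TsetB β y') := by
  rw [Set.disjoint_left]
  rintro α ⟨γ, hγ⟩ ⟨γ', hγ'⟩
  rw [hγ] at hγ'
  have := List.append_cancel_left hγ'
  simp only [List.cons.injEq] at this
  exact h this.1

lemma singleton_disjoint_extSet (β : List (Nbr d R)) (y : Nbr d R) :
    Disjoint ({(⟨β ++ [y], append_y_ne_nil β y⟩ : BrwIdx d R)} : Set (BrwIdx d R))
      (extSet (β ++ [y])) := by
  rw [Set.disjoint_left]
  rintro α hα ⟨γ, hγ, hval⟩
  replace hα : α = ⟨β ++ [y], append_y_ne_nil β y⟩ := hα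
  subst hα
  have := congrArg List.length hval
  simp only [List.length_append] at this
  have : γ.length = 0 := by omega
  exact hγ (List.length_eq_zero_iff.mp this)

lemma measSet_A (b : Ω → BrwIdx d R → Bool) (α : BrwIdx d R) :
    MeasurableSet[sigAt b α] {ω | b ω α = true} :=
  ⟨{true}, trivial, by ext ω; simp⟩

lemma EvB_measurable_ext (b : Ω → BrwIdx d R → Bool) (r : ℝ) :
    ∀ (m : ℕ) (x : Vert d) (β : List (Nbr d R)),
      MeasurableSet[⨆ α ∈ extSet β, sigAt b α] (EvB b r m x β) := by
  intro m
  induction m with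
  | zero =>
    intro x β
    by_cases h : isOutB R r x
    · rw [EvB_out h]; exact @MeasurableSet.univ Ω (⨆ α ∈ extSet β, sigAt b α)
    · rw [EvB_zero_not_out h]; exact @MeasurableSet.empty Ω (⨆ α ∈ extSet β, sigAt b α)
  | succ m ih =>
    intro x β
    by_cases h : isOutB R r x
    · rw [EvB_out h]; exact @MeasurableSet.univ Ω (⨆ α ∈ extSet β, sigAt b α)
    · rw [EvB_not_out h]
      refine MeasurableSet.iUnion fun y => MeasurableSet.inter ?_ ?_
      · have hle : sigAt b ⟨β ++ [y], append_y_ne_nil β y⟩ ≤ ⨆ α ∈ extSet β, sigAt b α :=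
          le_iSup₂ (f := fun (α : BrwIdx d R) (_ : α ∈ extSet β) => sigAt b α)
            _ (mem_extSet_append β y)
        exact hle _ (measSet_A b _)
      · have hle : (⨆ α ∈ extSet (β ++ [y]), sigAt b α) ≤ ⨆ α ∈ extSet β, sigAt b α :=
          biSup_mono (extSet_append_subset β y)
        exact hle _ (ih (x + y.val) (β ++ [y]))

lemma EvB_measurable_Tset (b : Ω → BrwIdx d R → Bool) (r : ℝ)
    (m : ℕ) (x : Vert d) (β : List (Nbr d R)) (y : Nbr d R) :
    MeasurableSet[⨆ α ∈ TsetB β y, sigAt b α]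
      ({ω | b ω ⟨β ++ [y], append_y_ne_nil β y⟩ = true} ∩ EvB b r m (x + y.val) (β ++ [y])) := by
  refine MeasurableSet.inter ?_ ?_
  · have hle : sigAt b ⟨β ++ [y], append_y_ne_nil β y⟩ ≤ ⨆ α ∈ TsetB β y, sigAt b α :=
      le_iSup₂ (f := fun (α : BrwIdx d R) (_ : α ∈ TsetB β y) => sigAt b α)
        _ (mem_TsetB_self β y)
    exact hle _ (measSet_A b _)
  · have hle : (⨆ α ∈ extSet (β ++ [y]), sigAt b α) ≤ ⨆ α ∈ TsetB β y, sigAt b α :=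
      biSup_mono (extSet_append_subset_TsetB β y)
    exact hle _ (EvB_measurable_ext b r m (x + y.val) (β ++ [y]))

end Prob

section Prob2

variable {d R : ℕ} {Ω : Type} [MeasurableSpace Ω] {μ : Measure Ω}
  {b : Ω → BrwIdx d R → Bool} {p : ℝ}

lemma sigAt_le (hmeas : ∀ α, Measurable fun ω => b ω α) (α : BrwIdx d R) :
    sigAt b α ≤ ‹MeasurableSpace Ω› :=
  measurable_iff_comap_le.mp (hmeas α)

lemma biSup_sigAt_le (hmeas : ∀ α, Measurable fun ω => b ω α) (S : Set (BrwIdx d R)) :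
    (⨆ α ∈ S, sigAt b α) ≤ ‹MeasurableSpace Ω› :=
  iSup₂_le fun α _ => sigAt_le hmeas α

lemma EvB_measurableSet (hmeas : ∀ α, Measurable fun ω => b ω α) (r : ℝ)
    (m : ℕ) (x : Vert d) (β : List (Nbr d R)) : MeasurableSet (EvB b r m x β) :=
  biSup_sigAt_le hmeas (extSet β) _ (EvB_measurable_ext b r m x β)

lemma step_prod [IsProbabilityMeasure μ] (hfield : IsBrwField μ d R p b) (r : ℝ)
    (m : ℕ) (x : Vert d) (β : List (Nbr d R)) (hnot : ¬ isOutB R r x) :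
    μ (EvB b r (m+1) x β)
      = 1 - ∏ y : Nbr d R,
          (1 - ENNReal.ofReal p * μ (EvB b r m (x + y.val) (β ++ [y]))) := by
  obtain ⟨hmeas, hind, hbern⟩ := hfield
  have hiI : iIndep (fun α : BrwIdx d R => sigAt b α) μ := hind.iIndep
  set C : Nbr d R → Set Ω := fun y =>
    {ω | b ω ⟨β ++ [y], append_y_ne_nil β y⟩ = true} ∩ EvB b r m (x + y.val) (β ++ [y])
    with hC
  have hCamb : ∀ y, MeasurableSet (C y) := fun y =>
    biSup_sigAt_le hmeas (TsetB β y) _ (EvB_measurable_Tset b r m x β y)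
  -- each C y has measure p * μ (B y)
  have hCy : ∀ y : Nbr d R,
      μ (C y) = ENNReal.ofReal p * μ (EvB b r m (x + y.val) (β ++ [y])) := by
    intro y
    have hindep : Indep
        (⨆ α ∈ ({(⟨β ++ [y], append_y_ne_nil β y⟩ : BrwIdx d R)} : Set (BrwIdx d R)), sigAt b α)
        (⨆ α ∈ extSet (β ++ [y]), sigAt b α) μ :=
      indep_iSup_of_disjoint (sigAt_le hmeas) hiI (singleton_disjoint_extSet β y)
    have hm1 : MeasurableSet[⨆ α ∈ ({(⟨β ++ [y], append_y_ne_nil β y⟩ : BrwIdx d R)}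
          : Set (BrwIdx d R)), sigAt b α] {ω | b ω ⟨β ++ [y], append_y_ne_nil β y⟩ = true} := by
      have hle : sigAt b ⟨β ++ [y], append_y_ne_nil β y⟩
          ≤ ⨆ α ∈ ({(⟨β ++ [y], append_y_ne_nil β y⟩ : BrwIdx d R)} : Set (BrwIdx d R)),
              sigAt b α :=
        le_iSup₂ (f := fun (α : BrwIdx d R) (_ : α ∈ ({(⟨β ++ [y], append_y_ne_nil β y⟩
            : BrwIdx d R)} : Set (BrwIdx d R))) => sigAt b α) _ rfl
      exact hle _ (measSet_A b _)
    have heq := (Indep_iff _ _ μ).mp hindep _ _ hm1 (EvB_measurable_ext b r m (x + y.val) (β ++ [y]))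
    rw [hC]
    simp only
    rw [heq, hbern ⟨β ++ [y], append_y_ne_nil β y⟩]
  -- product formula over finsets
  have hprod : ∀ F : Finset (Nbr d R),
      μ (⋂ y ∈ F, (C y)ᶜ) = ∏ y ∈ F, μ ((C y)ᶜ) := by
    intro F
    induction F using Finset.induction with
    | empty => simp
    | @insert a F ha ih =>
      rw [Finset.set_biInter_insert, Finset.prod_insert ha, ← ih]
      have hdisj : Disjoint (TsetB β a) (⋃ y ∈ (F : Set (Nbr d R)), TsetB β y) := by
        rw [Set.disjoint_left]
        intro α hα hα'
        rw [Set.mem_iUnion₂] at hα'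
        obtain ⟨y, hyF, hαy⟩ := hα'
        have hne : a ≠ y := by
          rintro rfl
          exact ha hyF
        exact Set.disjoint_left.mp (TsetB_disjoint β hne) hα hαy
      have hindep : Indep (⨆ α ∈ TsetB β a, sigAt b α)
          (⨆ α ∈ ⋃ y ∈ (F : Set (Nbr d R)), TsetB β y, sigAt b α) μ :=
        indep_iSup_of_disjoint (sigAt_le hmeas) hiI hdisj
      have hm1 : MeasurableSet[⨆ α ∈ TsetB β a, sigAt b α] ((C a)ᶜ) :=
        (EvB_measurable_Tset b r m x β a).compl
      have hm2 : MeasurableSet[⨆ α ∈ ⋃ y ∈ (F : Set (Nbr d R)), TsetB β y, sigAt b α]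
          (⋂ y ∈ F, (C y)ᶜ) := by
        refine Finset.measurableSet_biInter F fun y hy => ?_
        have hle : (⨆ α ∈ TsetB β y, sigAt b α)
            ≤ ⨆ α ∈ ⋃ y ∈ (F : Set (Nbr d R)), TsetB β y, sigAt b α :=
          biSup_mono (Set.subset_biUnion_of_mem (by exact_mod_cast hy))
        exact hle _ (EvB_measurable_Tset b r m x β y).compl
      exact (Indep_iff _ _ μ).mp hindep _ _ hm1 hm2
  -- assemble
  rw [EvB_not_out hnot]
  have hUnion : MeasurableSet (⋃ y : Nbr d R, C y) :=
    MeasurableSet.iUnion fun y => hCamb y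
  have hcompl : μ ((⋃ y : Nbr d R, C y)ᶜ) = 1 - μ (⋃ y : Nbr d R, C y) :=
    prob_compl_eq_one_sub hUnion
  have hIc : (⋃ y : Nbr d R, C y)ᶜ = ⋂ y ∈ (Finset.univ : Finset (Nbr d R)), (C y)ᶜ := by
    rw [Set.compl_iUnion]
    simp
  have hval : μ ((⋃ y : Nbr d R, C y)ᶜ)
      = ∏ y : Nbr d R, (1 - ENNReal.ofReal p * μ (EvB b r m (x + y.val) (β ++ [y]))) := by
    rw [hIc, hprod Finset.univ]
    refine Finset.prod_congr rfl fun y _ => ?_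
    rw [prob_compl_eq_one_sub (hCamb y), hCy y]
  have hle1 : μ (⋃ y : Nbr d R, C y) ≤ 1 := prob_le_one
  calc μ (⋃ y : Nbr d R, C y) = 1 - (1 - μ (⋃ y : Nbr d R, C y)) :=
        (ENNReal.sub_sub_cancel ENNReal.one_ne_top hle1).symm
    _ = 1 - μ ((⋃ y : Nbr d R, C y)ᶜ) := by rw [hcompl]
    _ = 1 - ∏ y : Nbr d R,
          (1 - ENNReal.ofReal p * μ (EvB b r m (x + y.val) (β ++ [y]))) := by rw [hval]

end Prob2

section Prob3

variable {d R : ℕ} {Ω : Type} [MeasurableSpace Ω] {μ : Measure Ω}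
  {b : Ω → BrwIdx d R → Bool} {p : ℝ}

/-- Main inductive bound: the exit probability is bounded by the supersolution `g`. -/
lemma EvB_bound [IsProbabilityMeasure μ] (hfield : IsBrwField μ d R p b)
    (hd1 : 1 ≤ d) (hR : 0 < R) {ε r : ℝ}
    (hε0 : 0 ≤ ε) (hε : ε ≤ 1/100) (hp0 : 0 ≤ p) (hp : p ≤ 1/4500)
    (hVp : (numNbr d R : ℝ) * p = 1 + ε) :
    ∀ (m : ℕ) (x : Vert d) (β : List (Nbr d R)),
      μ (EvB b r m x β) ≤ ENNReal.ofReal (ggB d R ε r x) := by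
  intro m
  induction m with
  | zero =>
    intro x β
    by_cases h : isOutB R r x
    · rw [EvB_out h, ggB_eq_one_of_isOut hε0 h, measure_univ, ENNReal.ofReal_one]
    · rw [EvB_zero_not_out h]
      simp
  | succ m ih =>
    intro x β
    by_cases h : isOutB R r x
    · rw [EvB_out h, ggB_eq_one_of_isOut hε0 h, measure_univ, ENNReal.ofReal_one]
    · rw [step_prod hfield r m x β h]
      -- bound each factor from below
      have hfac : ∀ y : Nbr d R,
          ENNReal.ofReal (1 - p * ggB d R ε r (x + y.val))
            ≤ 1 - ENNReal.ofReal p * μ (EvB b r m (x + y.val) (β ++ [y])) := by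
        intro y
        have h1 : ENNReal.ofReal p * μ (EvB b r m (x + y.val) (β ++ [y]))
            ≤ ENNReal.ofReal (p * ggB d R ε r (x + y.val)) := by
          rw [ENNReal.ofReal_mul hp0]
          exact mul_le_mul_right (ih (x + y.val) (β ++ [y])) _
        calc ENNReal.ofReal (1 - p * ggB d R ε r (x + y.val))
            = 1 - ENNReal.ofReal (p * ggB d R ε r (x + y.val)) := by
              rw [ENNReal.ofReal_sub 1 (mul_nonneg hp0 (ggB_nonneg (R := R) (r := r) hε0 _)),
                ENNReal.ofReal_one]
          _ ≤ 1 - ENNReal.ofReal p * μ (EvB b r m (x + y.val) (β ++ [y])) :=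
              tsub_le_tsub_left h1 1
      have hprodge : ENNReal.ofReal (∏ y : Nbr d R, (1 - p * ggB d R ε r (x + y.val)))
          ≤ ∏ y : Nbr d R,
              (1 - ENNReal.ofReal p * μ (EvB b r m (x + y.val) (β ++ [y]))) := by
        rw [ENNReal.ofReal_prod_of_nonneg (fun y _ => by
          have h1 := ggB_le_one (d := d) (R := R) (ε := ε) (r := r) (x + y.val)
          have h2 := ggB_nonneg (R := R) (r := r) hε0 (x + y.val)
          nlinarith)]
        exact Finset.prod_le_prod' fun y _ => hfac y
      have hcore : 1 - ∏ y : Nbr d R, (1 - p * ggB d R ε r (x + y.val))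
          ≤ ggB d R ε r x := by
        have := coreB (r := r) hd1 hR hε0 hε hp0 hp hVp x
        rw [← prod_nbr_eq (fun z => 1 - p * ggB d R ε r (x + z))] at this
        exact this
      calc 1 - ∏ y : Nbr d R,
            (1 - ENNReal.ofReal p * μ (EvB b r m (x + y.val) (β ++ [y])))
          ≤ 1 - ENNReal.ofReal (∏ y : Nbr d R, (1 - p * ggB d R ε r (x + y.val))) :=
            tsub_le_tsub_left hprodge 1
        _ = ENNReal.ofReal (1 - ∏ y : Nbr d R, (1 - p * ggB d R ε r (x + y.val))) := by
            rw [ENNReal.ofReal_sub 1 (Finset.prod_nonneg fun y _ => by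
              have h1 := ggB_le_one (d := d) (R := R) (ε := ε) (r := r) (x + y.val)
              have h2 := ggB_nonneg (R := R) (r := r) hε0 (x + y.val)
              nlinarith), ENNReal.ofReal_one]
        _ ≤ ENNReal.ofReal (ggB d R ε r x) := ENNReal.ofReal_le_ofReal hcore

end Prob3

section Prob4

variable {d R : ℕ} {Ω : Type} [MeasurableSpace Ω]

lemma brwPos_cons (y : Nbr d R) (γ : List (Nbr d R)) :
    brwPos (y :: γ) = y.val + brwPos γ := by
  unfold brwPos; exact List.sum_cons

lemma mem_EvB_of_path {b : Ω → BrwIdx d R → Bool} {r : ℝ} {ω : Ω} :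
    ∀ (m : ℕ) (γ : List (Nbr d R)) (x : Vert d) (β : List (Nbr d R)),
      γ ≠ [] → γ.length ≤ m →
      (∀ k, 0 < k → k ≤ γ.length → bext (b ω) (β ++ γ.take k) = true) →
      isOutB R r (x + brwPos γ) → ω ∈ EvB b r m x β := by
  intro m
  induction m with
  | zero =>
    intro γ x β hne hlen _ _
    exact absurd (List.length_pos_iff.mpr hne) (by omega)
  | succ m ih =>
    intro γ x β hne hlen hon hout
    by_cases hx : isOutB R r x
    · rw [EvB_out hx]; trivial
    · rw [EvB_not_out hx]
      rcases γ with _ | ⟨y, γ'⟩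
      · exact absurd rfl hne
      refine Set.mem_iUnion.mpr ⟨y, ?_, ?_⟩
      · -- the first bit is on
        have h1 := hon 1 (by norm_num) (by simp)
        have ht : (y :: γ').take 1 = [y] := rfl
        rw [ht] at h1
        rw [bext, dif_neg (append_y_ne_nil β y)] at h1
        exact h1
      · -- the rest of the path
        by_cases hne' : γ' = []
        · subst hne'
          have hxy : x + brwPos [y] = x + y.val := by
            rw [brwPos_cons]
            simp [brwPos]
            rfl
          rw [hxy] at hout
          rw [EvB_out hout]
          trivial
        · apply ih γ' (x + y.val) (β ++ [y]) hne' (by simpa using hlen)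
          · intro k hk0 hkl
            have h2 := hon (k+1) (by omega) (by simpa using hkl)
            have ht : (y :: γ').take (k+1) = y :: γ'.take k := rfl
            rw [ht] at h2
            have he : β ++ y :: γ'.take k = (β ++ [y]) ++ γ'.take k := by simp
            rw [he] at h2
            exact h2
          · have : x + y.val + brwPos γ' = x + brwPos (y :: γ') := by
              rw [brwPos_cons, add_assoc]
            rw [this]
            exact hout

end Prob4

set_option maxHeartbeats 2000000 in
/-- Range bound for the branching random walk: for `d = 2, 3` and `V(R)p = 1 + θ/R^{d−1}`,
for every `c > 0` and `K ∈ ℕ` there is `A(c,K)`, nondecreasing in `c` and `K`, with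
`P(R_n ∩ ([−r,r]^d)ᶜ ≠ ∅) ≤ A(c,K)/(r+1)^2` for all `R`, `n ≤ cR^{d−1}`, `r ≤ K√n`. -/
theorem brw_range_bound (d : ℕ) (hd : d = 2 ∨ d = 3) (θ : ℝ) (hθ0 : 0 < θ) (hθ1 : θ ≤ 1) :
    ∃ A : ℝ → ℕ → ℝ,
      (∀ c c' K K', 0 < c → c ≤ c' → K ≤ K' → A c K ≤ A c' K') ∧
      ∀ c : ℝ, 0 < c → ∀ K : ℕ, ∀ R : ℕ, 0 < R → ∀ p : ℝ,
        (numNbr d R : ℝ) * p = 1 + θ / (R : ℝ) ^ (d - 1) →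
        ∀ (Ω : Type) [MeasurableSpace Ω] (μ : Measure Ω), IsProbabilityMeasure μ →
        ∀ b : Ω → BrwIdx d R → Bool, IsBrwField μ d R p b →
        ∀ n : ℕ, (n : ℝ) ≤ c * (R : ℝ) ^ (d - 1) →
        ∀ r : ℝ, 0 ≤ r → r ≤ (K : ℝ) * Real.sqrt n →
        μ {ω | ∃ x : Vert d, (∃ j, 1 ≤ j ∧ j ≤ n ∧ 0 < brwZ (b ω) j x) ∧
            ∃ i, r < |(x i : ℝ)| / R}
          ≤ ENNReal.ofReal (A c K / (r + 1) ^ 2) := by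
  refine ⟨fun c K => (10*(K:ℝ)*(c+1)+1)^2 + 10*(2*(K:ℝ)^2*c+2) + 60000, ?_, ?_⟩
  · -- monotonicity
    intro c c' K K' hc hcc hKK
    have hK0 : (0:ℝ) ≤ (K:ℝ) := Nat.cast_nonneg K
    have hKK' : (K:ℝ) ≤ (K':ℝ) := Nat.cast_le.mpr hKK
    have hc0 : (0:ℝ) ≤ c := hc.le
    have hc'0 : (0:ℝ) ≤ c' := le_trans hc0 hcc
    have h1 : 10*(K:ℝ)*(c+1) ≤ 10*(K':ℝ)*(c'+1) := by nlinarith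
    have h1' : (0:ℝ) ≤ 10*(K:ℝ)*(c+1) := by positivity
    have hsq : (10*(K:ℝ)*(c+1)+1)^2 ≤ (10*(K':ℝ)*(c'+1)+1)^2 := by nlinarith
    have hK2 : (K:ℝ)^2 ≤ (K':ℝ)^2 := by nlinarith
    have h2 : (K:ℝ)^2 * c ≤ (K':ℝ)^2 * c' := by nlinarith
    dsimp only
    linarith
  · -- main bound
    intro c hc K R hR p hVp Ω _ μ hprob b hfield n hn r hr0 hrK
    set ε : ℝ := θ / (R : ℝ) ^ (d - 1) with hεdef
    have hd1 : 1 ≤ d := by rcases hd with rfl | rfl <;> omega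
    have hRR : (0:ℝ) < (R:ℝ) := by exact_mod_cast hR
    have hRpow : (0:ℝ) < (R : ℝ) ^ (d - 1) := by positivity
    have hRpow1 : (1:ℝ) ≤ (R : ℝ) ^ (d - 1) := one_le_pow₀ (by exact_mod_cast hR)
    have hε0 : 0 < ε := by positivity
    have hrp1 : (0:ℝ) < (r+1)^2 := by positivity
    -- event inclusion
    have hsub : {ω | ∃ x : Vert d, (∃ j, 1 ≤ j ∧ j ≤ n ∧ 0 < brwZ (b ω) j x) ∧
        ∃ i, r < |(x i : ℝ)| / R} ⊆ EvB b r n (0 : Vert d) ([] : List (Nbr d R)) := by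
      rintro ω ⟨x, ⟨j, hj1, hjn, hZ⟩, i, hi⟩
      obtain ⟨α, ⟨⟨hlen, hon⟩, hpos⟩⟩ :=
        Set.nonempty_of_ncard_ne_zero (Nat.pos_iff_ne_zero.mp hZ)
      apply mem_EvB_of_path n α (0 : Vert d) ([] : List (Nbr d R))
      · exact List.ne_nil_of_length_pos (by omega)
      · omega
      · intro k hk0 hkl
        rw [List.nil_append]
        exact hon k hk0 (by omega)
      · rw [zero_add, hpos]
        exact ⟨i, hi⟩
    have hmono := measure_mono (μ := μ) hsub
    rcases le_or_gt r (10*(K:ℝ)*(c+1)) with hsmall | hbig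
    · -- small r : trivial bound
      refine le_trans prob_le_one ?_
      rw [ENNReal.one_le_ofReal, le_div_iff₀ hrp1]
      have hK0 : (0:ℝ) ≤ (K:ℝ) := Nat.cast_nonneg K
      have h2 : (0:ℝ) ≤ 2*(K:ℝ)^2*c := by positivity
      have hBr : (0:ℝ) ≤ 10*(K:ℝ)*(c+1) - r := by linarith
      have hB0 : (0:ℝ) ≤ 10*(K:ℝ)*(c+1) := by positivity
      have hsq : (r+1)^2 ≤ (10*(K:ℝ)*(c+1)+1)^2 := by nlinarith
      dsimp only
      linarith
    · -- large r : the supersolution argument applies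
      have hK0 : (0:ℝ) ≤ (K:ℝ) := Nat.cast_nonneg K
      have hK1 : (1:ℝ) ≤ (K:ℝ) := by
        rcases Nat.eq_zero_or_pos K with rfl | hKpos
        · exfalso
          simp only [Nat.cast_zero, zero_mul] at hrK hbig
          have : r = 0 := le_antisymm hrK hr0
          rw [this] at hbig
          nlinarith
        · exact_mod_cast hKpos
      have hr2 : r^2 ≤ (K:ℝ)^2 * n := by
        have hs := Real.sq_sqrt (Nat.cast_nonneg n : (0:ℝ) ≤ (n:ℝ))
        nlinarith [hrK, hr0, Real.sqrt_nonneg (n:ℝ)]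
      have hrKX : r^2 ≤ (K:ℝ)^2 * c * (R : ℝ) ^ (d - 1) := by nlinarith
      have hr10 : 10*(K:ℝ)*(c+1) < r := hbig
      have hB0 : (0:ℝ) ≤ 10*(K:ℝ)*(c+1) := by positivity
      have hrbig2 : 100*(K:ℝ)^2*(c+1)^2 < r^2 := by
        nlinarith [mul_self_lt_mul_self hB0 hr10]
      have hKsq1 : (1:ℝ) ≤ (K:ℝ)^2 := by nlinarith
      have hc1 : c ≤ (c+1)^2 := by nlinarith
      have hR100 : (100:ℝ) ≤ (R : ℝ) ^ (d - 1) := by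
        by_contra hcon
        push_neg at hcon
        have hKc : (0:ℝ) < (K:ℝ)^2 * c := by positivity
        have h1 : (K:ℝ)^2 * c * (R:ℝ)^(d-1) < (K:ℝ)^2 * c * 100 :=
          mul_lt_mul_of_pos_left hcon hKc
        have h2 : (K:ℝ)^2*c*100 ≤ 100*(K:ℝ)^2*(c+1)^2 := by nlinarith [hc1, hc.le]
        linarith
      have hε : ε ≤ 1/100 := by
        rw [hεdef, div_le_iff₀ hRpow]
        linarith
      have hV9000 : (9000:ℝ) ≤ (numNbr d R : ℝ) := by
        rw [numNbr_cast]
        rcases hd with rfl | rfl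
        · have : (100:ℝ) ≤ (R:ℝ) := by
            have : ((R:ℝ)) ^ (2-1) = (R:ℝ) := by norm_num
            linarith [hR100, this.symm.le, this.le]
          nlinarith
        · have h10 : (10:ℝ) ≤ (R:ℝ) := by
            have he : ((R:ℝ)) ^ (3-1) = (R:ℝ)^2 := by norm_num
            nlinarith [hR100, he]
          nlinarith
      have hp0 : 0 ≤ p := by nlinarith
      have hp : p ≤ 1/4500 := by nlinarith
      -- apply the inductive bound
      have hbound := EvB_bound (r := r) hfield hd1 hR (le_of_lt hε0) hε hp0 hp hVp n
        (0 : Vert d) ([] : List (Nbr d R))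
      refine le_trans hmono (le_trans hbound (ENNReal.ofReal_le_ofReal ?_))
      -- estimate g(0)
      have hgg : ggB d R ε r 0 ≤ 10*ε + (d:ℝ) * (2 * psiB r) := by
        refine le_trans (ggB_le_phiB (0 : Vert d)) ?_
        rw [phiB]
        have he : ∀ i : Fin d, psiB (r - ((0 : Vert d) i : ℝ)/(R:ℝ))
            + psiB (r + ((0 : Vert d) i : ℝ)/(R:ℝ)) = 2 * psiB r := by
          intro i
          have h0 : ((0 : Vert d) i : ℝ) = 0 := by simp
          rw [h0]
          norm_num
          ring
        rw [Finset.sum_congr rfl fun i _ => he i, Finset.sum_const, Finset.card_univ,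
          Fintype.card_fin, nsmul_eq_mul]
      have hψr : psiB r * (r+1)^2 ≤ 10000 := by
        rw [psiB_of_nonneg hr0, div_mul_eq_mul_div, div_le_iff₀ (by positivity)]
        nlinarith
      have hεr : ε * (r+1)^2 ≤ θ*(2*(K:ℝ)^2*c+2) := by
        rw [hεdef, div_mul_eq_mul_div, div_le_iff₀ hRpow]
        have h1 : (r+1)^2 ≤ 2*r^2 + 2 := by nlinarith [sq_nonneg (r-1)]
        have h2 : (2:ℝ)*r^2 + 2 ≤ (2*(K:ℝ)^2*c+2) * (R : ℝ) ^ (d - 1) := by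
          nlinarith [sq_nonneg (K:ℝ), hc.le]
        nlinarith
      have hd3 : (d:ℝ) ≤ 3 := by rcases hd with rfl | rfl <;> norm_num
      rw [le_div_iff₀ hrp1]
      have hψ0 := psiB_pos r
      have hd0 : (0:ℝ) ≤ (d:ℝ) := Nat.cast_nonneg d
      have h2K : (0:ℝ) ≤ 2*(K:ℝ)^2*c+2 := by positivity
      calc ggB d R ε r 0 * (r+1)^2 ≤ (10*ε + (d:ℝ) * (2 * psiB r)) * (r+1)^2 := by
            apply mul_le_mul_of_nonneg_right hgg hrp1.le
        _ = 10*(ε*(r+1)^2) + 2*(d:ℝ)*(psiB r * (r+1)^2) := by ring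
        _ ≤ 10*(θ*(2*(K:ℝ)^2*c+2)) + 2*3*10000 := by
            have hm1 : 10*(ε*(r+1)^2) ≤ 10*(θ*(2*(K:ℝ)^2*c+2)) := by linarith
            have hm2 : 2*(d:ℝ)*(psiB r * (r+1)^2) ≤ 2*3*10000 := by
              have hpr : 0 ≤ psiB r * (r+1)^2 := by positivity
              nlinarith
            linarith
        _ ≤ (10*(K:ℝ)*(c+1)+1)^2 + 10*(2*(K:ℝ)^2*c+2) + 60000 := by nlinarith

end
end
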